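/- arXiv:2508.00411 — 5 statements merged into one kernel-verified Lean document; each statement's English description precedes it below -/
import Mathlib

section
/- Let (a_n) be a positive, decreasing real sequence with a_n → 0 and let u > 0. Then there exist a constant C > 0 and N ∈ ℕ such that for all z ∈ ℝ and all n ≥ N, ∫_ℝ a_n^{-1/2} · exp(-u·|x|) · exp(-(x - z)²/a_n) dx ≤ C · exp(-u·|z|). -/
open MeasureTheory

/-- Lemma 4.1: Laplace–Gaussian convolution bound with vanishing variance. -/
theorem laplace_gaussian_convolution_bound
    (a : ℕ → ℝ) (ha_pos : ∀ n, 0 < a n)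
    (ha_dec : ∀ m n, m ≤ n → a n ≤ a m)
    (ha_lim : Filter.Tendsto a Filter.atTop (nhds 0))
    (u : ℝ) (hu : 0 < u) :
    ∃ C > (0 : ℝ), ∃ N : ℕ, ∀ z : ℝ, ∀ n ≥ N,
      ∫ x : ℝ, (Real.sqrt (a n))⁻¹ * Real.exp (-u * |x|) *
          Real.exp (-(x - z) ^ 2 / a n)
        ≤ C * Real.exp (-u * |z|) := by
  obtain ⟨N, hN⟩ := Filter.eventually_atTop.mp
    (ha_lim.eventually (gt_mem_nhds (show (0:ℝ) < 1 by norm_num)))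
  refine ⟨Real.sqrt (2 * Real.pi) * Real.exp (u ^ 2 / 2), by positivity, N, ?_⟩
  intro z n hn
  set A := a n with hA
  have haA : 0 < A := ha_pos n
  have ha1 : A ≤ 1 := (hN n hn).le
  have hsA : 0 < Real.sqrt A := Real.sqrt_pos.mpr haA
  have hb : 0 < 1 / (2 * A) := by positivity
  set g : ℝ → ℝ := fun x =>
    ((Real.sqrt A)⁻¹ * (Real.exp (u ^ 2 / 2) * Real.exp (-u * |z|))) *
      Real.exp (-(1 / (2 * A)) * (x - z) ^ 2) with hg
  have hgint : Integrable g :=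
    ((integrable_exp_neg_mul_sq hb).comp_sub_right z).const_mul _
  have hle : ∀ x, (Real.sqrt A)⁻¹ * Real.exp (-u * |x|) *
      Real.exp (-(x - z) ^ 2 / A) ≤ g x := by
    intro x
    have key : -u * |x| + (-(x - z) ^ 2 / A) ≤
        u ^ 2 / 2 + -u * |z| + (-(1 / (2 * A)) * (x - z) ^ 2) := by
      have habs : |z| - |x| ≤ |x - z| := by
        have := abs_sub_abs_le_abs_sub z x
        rwa [abs_sub_comm] at this
      set D := (x - z) ^ 2 / (2 * A) with hD
      have hDmul : D * (2 * A) = (x - z) ^ 2 := div_mul_cancel₀ _ (by positivity)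
      have hkey2 : u * |x - z| ≤ u ^ 2 / 2 + D := by
        nlinarith [sq_nonneg (|x - z| - A * u), sq_abs (x - z),
          mul_le_mul_of_nonneg_right ha1 (sq_nonneg u), haA, hu.le,
          mul_pos haA haA]
      have e1 : -(x - z) ^ 2 / A = -(1 / (2 * A)) * (x - z) ^ 2 - D := by
        field_simp [hD]; linear_combination hDmul
      have e2 : u * |z| - u * |x| ≤ u * |x - z| := by
        have := mul_le_mul_of_nonneg_left habs hu.le
        linarith [this]
      linarith [e2, hkey2, e1.ge, e1.le]
    have h1 : Real.exp (-u * |x|) * Real.exp (-(x - z) ^ 2 / A) ≤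
        Real.exp (u ^ 2 / 2) * Real.exp (-u * |z|) *
          Real.exp (-(1 / (2 * A)) * (x - z) ^ 2) := by
      rw [← Real.exp_add, ← Real.exp_add, ← Real.exp_add]
      exact Real.exp_le_exp.mpr key
    have := mul_le_mul_of_nonneg_left h1 (inv_nonneg.mpr hsA.le)
    calc (Real.sqrt A)⁻¹ * Real.exp (-u * |x|) * Real.exp (-(x - z) ^ 2 / A)
        = (Real.sqrt A)⁻¹ * (Real.exp (-u * |x|) * Real.exp (-(x - z) ^ 2 / A)) := by
          ring
      _ ≤ (Real.sqrt A)⁻¹ * (Real.exp (u ^ 2 / 2) * Real.exp (-u * |z|) *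
            Real.exp (-(1 / (2 * A)) * (x - z) ^ 2)) := this
      _ = g x := by rw [hg]; ring
  have hmono : ∫ x : ℝ, (Real.sqrt A)⁻¹ * Real.exp (-u * |x|) *
      Real.exp (-(x - z) ^ 2 / A) ≤ ∫ x, g x := by
    apply integral_mono_of_nonneg
    · exact Filter.Eventually.of_forall fun x => by positivity
    · exact hgint
    · exact Filter.Eventually.of_forall hle
  have hgval : ∫ x, g x = Real.sqrt (2 * Real.pi) * Real.exp (u ^ 2 / 2) *
      Real.exp (-u * |z|) := by
    rw [hg]
    rw [MeasureTheory.integral_const_mul]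
    have ht : ∫ x : ℝ, Real.exp (-(1 / (2 * A)) * (x - z) ^ 2) =
        ∫ x : ℝ, Real.exp (-(1 / (2 * A)) * x ^ 2) :=
      integral_sub_right_eq_self (fun x => Real.exp (-(1 / (2 * A)) * x ^ 2)) z
    rw [ht, integral_gaussian]
    have : Real.pi / (1 / (2 * A)) = 2 * Real.pi * A := by
      field_simp
    rw [this, Real.sqrt_mul (by positivity)]
    field_simp
  calc _ ≤ ∫ x, g x := hmono
    _ = _ := by rw [hgval]
end

section
/- Let (a_n) be a positive, decreasing real sequence with a_n → 0 and let u > 0. Then there exist L > 0 and N ∈ ℕ such that for all n ≥ N and all z ∈ ℝ, exp(-u·z) · ∫_{-a_n^{-1/2}(z - u·a_n)}^{∞} exp(-v²) dv ≤ L · exp(-u·|z|). -/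
/-!
Write `G t = ∫_{[t, ∞)} exp (-v²)`, so `G t ≤ √π` always and `G t ≤ √π exp (-t²)` for `t ≥ 0`.
For `z ≥ 0` the first bound suffices. For `z < 0` the lower limit `t = (u a - z) / √a` is
nonnegative and `t² = z² / a - 2 u z + u² a ≥ -2 u z`, so `exp (-u z) G t ≤ √π exp (u z)`.
Hence `L = √π` and `N = 0` work, uniformly in `a > 0`.
-/

open MeasureTheory Real Set

lemma integrable_exp_neg_sq : Integrable (fun v : ℝ => exp (-v ^ 2)) := by
  simpa using integrable_exp_neg_mul_sq one_pos

lemma integral_exp_neg_sq : ∫ v : ℝ, exp (-v ^ 2) = √π := by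
  simpa using integral_gaussian 1

lemma setIntegral_exp_neg_sq_le (s : Set ℝ) : ∫ v in s, exp (-v ^ 2) ≤ √π :=
  integral_exp_neg_sq ▸ setIntegral_le_integral integrable_exp_neg_sq
    (.of_forall fun _ => (exp_pos _).le)

lemma integral_Ici_exp_neg_sq_le {t : ℝ} (ht : 0 ≤ t) :
    ∫ v in Ici t, exp (-v ^ 2) ≤ √π * exp (-t ^ 2) := by
  have hshift : Integrable (fun v : ℝ => exp (-(v - t) ^ 2)) :=
    integrable_exp_neg_sq.comp_sub_right t
  calc ∫ v in Ici t, exp (-v ^ 2)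
      ≤ ∫ v in Ici t, exp (-t ^ 2) * exp (-(v - t) ^ 2) := by
        refine setIntegral_mono_on integrable_exp_neg_sq.integrableOn
          (hshift.const_mul _).integrableOn measurableSet_Ici fun v hv => ?_
        -- `v² = t² + (v - t)² + 2 t (v - t)` and the last term is nonnegative on `[t, ∞)`
        rw [← exp_add, exp_le_exp]
        nlinarith [mem_Ici.mp hv]
    _ = exp (-t ^ 2) * ∫ v in Ici t, exp (-(v - t) ^ 2) := integral_const_mul _ _
    _ ≤ exp (-t ^ 2) * ∫ v : ℝ, exp (-(v - t) ^ 2) :=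
        mul_le_mul_of_nonneg_left
          (setIntegral_le_integral hshift (.of_forall fun _ => (exp_pos _).le)) (exp_pos _).le
    _ = √π * exp (-t ^ 2) := by
        rw [integral_sub_right_eq_self (fun v => exp (-v ^ 2)), integral_exp_neg_sq, mul_comm]

lemma exp_neg_mul_mul_integral_Ici_exp_neg_sq_le {a u : ℝ} (ha : 0 < a) (hu : 0 ≤ u) (z : ℝ) :
    exp (-u * z) * ∫ v in Ici (-(√a)⁻¹ * (z - u * a)), exp (-v ^ 2) ≤ √π * exp (-u * |z|) := by
  set t := -(√a)⁻¹ * (z - u * a)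
  rcases le_or_gt 0 z with hz | hz
  · rw [abs_of_nonneg hz, mul_comm (√π)]
    exact mul_le_mul_of_nonneg_left (setIntegral_exp_neg_sq_le _) (exp_pos _).le
  · have ht : 0 ≤ t := mul_nonneg_of_nonpos_of_nonpos
      (neg_nonpos.mpr (inv_nonneg.mpr (sqrt_nonneg a))) (by nlinarith)
    have ht_sq : t ^ 2 = (z - u * a) ^ 2 / a := by
      rw [mul_pow, neg_sq, inv_pow, sq_sqrt ha.le, inv_mul_eq_div]
    have h_decay : -2 * u * z ≤ t ^ 2 := by
      rw [ht_sq, le_div_iff₀ ha]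
      nlinarith [sq_nonneg z, sq_nonneg (u * a)]
    calc exp (-u * z) * ∫ v in Ici t, exp (-v ^ 2)
        ≤ exp (-u * z) * (√π * exp (-t ^ 2)) := by
          gcongr
          exact integral_Ici_exp_neg_sq_le ht
      _ = √π * exp (-u * z + -t ^ 2) := by rw [exp_add]; ring
      _ ≤ √π * exp (-u * |z|) := by
          rw [abs_of_neg hz]
          gcongr
          linarith

theorem exp_mul_gaussian_tail_bound_general
    (a : ℕ → ℝ) (ha_pos : ∀ n, 0 < a n)
    (u : ℝ) (hu : 0 < u) :
    ∃ L > (0 : ℝ), ∃ N : ℕ, ∀ n ≥ N, ∀ z : ℝ,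
      Real.exp (-u * z) *
          ∫ v in Set.Ici (-(Real.sqrt (a n))⁻¹ * (z - u * a n)), Real.exp (-v ^ 2)
        ≤ L * Real.exp (-u * |z|) :=
  ⟨√π, sqrt_pos.mpr pi_pos, 0, fun n _ z =>
    exp_neg_mul_mul_integral_Ici_exp_neg_sq_le (ha_pos n) hu.le z⟩

/-- Key intermediate estimate (4.2) in the proof of Lemma 4.1. -/
theorem exp_mul_gaussian_tail_bound
    (a : ℕ → ℝ) (ha_pos : ∀ n, 0 < a n)
    (ha_dec : ∀ m n, m ≤ n → a n ≤ a m)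
    (ha_lim : Filter.Tendsto a Filter.atTop (nhds 0))
    (u : ℝ) (hu : 0 < u) :
    ∃ L > (0 : ℝ), ∃ N : ℕ, ∀ n ≥ N, ∀ z : ℝ,
      Real.exp (-u * z) *
          ∫ v in Set.Ici (-(Real.sqrt (a n))⁻¹ * (z - u * a n)), Real.exp (-v ^ 2)
        ≤ L * Real.exp (-u * |z|) :=
  exp_mul_gaussian_tail_bound_general a ha_pos u hu
end

section
/- Let (a_n) be a positive, decreasing real sequence with a_n → 0, let u > 0, and let (b_k)_{k≥1} be a positive, decreasing sequence with b_1 < 1 and lim_{k→∞} b_k = ζ > 0. Then there exist a constant C > 0 and N ∈ ℕ such that for all n ≥ N, all k ≥ 1 and all z ∈ ℝ: ∫_{ℝ^k} a_n^{-1/2} · exp(-u·Σ_{i=1}^k |x_i|) · exp(-(Σ_{i=1}^k x_i - z)²/a_n) dx_1⋯dx_k ≤ C^k · exp(-u·b_k·|z|). In particular, since b_k ≥ ζ for all k, the left-hand side is bounded by C^k · exp(-u·ζ·|z|) for all k. -/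
set_option maxHeartbeats 1000000

open MeasureTheory Real

lemma lap_int (c : ℝ) (hc : 0 < c) : ∫ x : ℝ, Real.exp (-(c * |x|)) = 2 / c := by
  rw [integral_comp_abs (f := fun x : ℝ => Real.exp (-(c * x)))]
  have : ∀ x : ℝ, Real.exp (-(c * x)) = Real.exp (-x * c) := by intro x; ring_nf
  simp_rw [this]
  rw [show (fun x : ℝ => Real.exp (-x * c)) = fun x : ℝ => Real.exp (-(x * c)) from by ext x; ring_nf]
  rw [integral_comp_mul_right_Ioi (fun y : ℝ => Real.exp (-y)) 0 hc]
  simp [integral_exp_neg_Ioi, smul_eq_mul, integral_exp_Iic_zero]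
  rw [mul_comm]
  rw [eq_div_iff (ne_of_gt hc)]
  field_simp

lemma gauss_int (a : ℝ) (ha : 0 < a) (w : ℝ) :
    ∫ t : ℝ, (Real.sqrt a)⁻¹ * Real.exp (-(t - w)^2 / (2*a)) = Real.sqrt (2*Real.pi) := by
  rw [integral_const_mul]
  have h1 : ∫ t : ℝ, Real.exp (-(t - w)^2 / (2*a)) = ∫ t : ℝ, Real.exp (-(1/(2*a)) * t^2) := by
    rw [← integral_sub_right_eq_self (fun t : ℝ => Real.exp (-(1/(2*a)) * t^2)) w]
    congr 1; ext t; congr 1; field_simp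
  rw [h1, integral_gaussian]
  rw [show Real.pi / (1/(2*a)) = (2*Real.pi) * a from by field_simp]
  rw [Real.sqrt_mul (by positivity)]
  rw [← mul_assoc, mul_comm ((Real.sqrt a)⁻¹), mul_assoc]
  rw [inv_mul_cancel₀ (by positivity : Real.sqrt a ≠ 0), mul_one]

lemma gauss_integrable (a w : ℝ) (ha : 0 < a) :
    Integrable (fun t : ℝ => (Real.sqrt a)⁻¹ * Real.exp (-(t - w)^2 / (2*a))) := by
  have h := (integrable_exp_neg_mul_sq (show (0:ℝ) < 1/(2*a) by positivity))
  have h2 : Integrable (fun t : ℝ => Real.exp (-(1/(2*a)) * (t - w)^2)) := by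
    exact h.comp_sub_right w
  have heq : (fun t : ℝ => (Real.sqrt a)⁻¹ * Real.exp (-(t - w)^2 / (2*a)))
      = fun t : ℝ => (Real.sqrt a)⁻¹ * Real.exp (-(1/(2*a)) * (t - w)^2) := by
    ext t; congr 2; field_simp
  rw [heq]
  exact h2.const_mul _

lemma lap_integrable (c : ℝ) (hc : 0 < c) : Integrable (fun x : ℝ => Real.exp (-(c * |x|))) := by
  have hIoi : IntegrableOn (fun x : ℝ => Real.exp (-(c * |x|))) (Set.Ioi 0) := by
    refine (exp_neg_integrableOn_Ioi 0 hc).congr_fun ?_ measurableSet_Ioi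
    intro x hx
    simp only []
    rw [abs_of_pos hx, neg_mul]
  have A : MeasurableEmbedding (fun x : ℝ => -x) := (Homeomorph.neg ℝ).measurableEmbedding
  have hIic : IntegrableOn (fun x : ℝ => Real.exp (-(c * |x|))) (Set.Iic 0) := by
    rw [← Measure.map_neg_eq_self (volume : Measure ℝ), A.integrableOn_map_iff]
    simp only [Function.comp_def, abs_neg, Set.neg_preimage, Set.neg_Iic, neg_zero]
    exact (integrableOn_Ici_iff_integrableOn_Ioi).mpr hIoi
  have h := hIic.union hIoi
  rwa [Set.Iic_union_Ioi, integrableOn_univ] at h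

lemma meas_F (k : ℕ) (a c d w : ℝ) :
    Measurable (fun x : Fin k → ℝ =>
      ENNReal.ofReal ((Real.sqrt a)⁻¹ * Real.exp (-(c * ∑ i, |x i|)) *
        Real.exp (-((∑ i, x i) - w)^2 / d))) := by
  apply ENNReal.measurable_ofReal.comp
  apply Continuous.measurable
  fun_prop

lemma lap_lintegral (c : ℝ) (hc : 0 < c) :
    ∫⁻ x : ℝ, ENNReal.ofReal (Real.exp (-(c * |x|))) = ENNReal.ofReal (2 / c) := by
  rw [← ofReal_integral_eq_lintegral_ofReal (lap_integrable c hc)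
    (Filter.Eventually.of_forall fun x => (Real.exp_pos _).le), lap_int c hc]

lemma gauss_lintegral (a : ℝ) (ha : 0 < a) (w : ℝ) :
    ∫⁻ t : ℝ, ENNReal.ofReal ((Real.sqrt a)⁻¹ * Real.exp (-(t - w)^2 / (2*a)))
      = ENNReal.ofReal (Real.sqrt (2*Real.pi)) := by
  rw [← ofReal_integral_eq_lintegral_ofReal (gauss_integrable a w ha)
    (Filter.Eventually.of_forall fun x => by positivity), gauss_int a ha w]

lemma core (a c : ℝ) (ha : 0 < a) (hc : 0 < c) :
    ∀ (k : ℕ) (w : ℝ),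
      (∫⁻ x : Fin (k+1) → ℝ, ENNReal.ofReal ((Real.sqrt a)⁻¹
          * Real.exp (-(c * ∑ i, |x i|)) * Real.exp (-((∑ i, x i) - w)^2 / (2*a))))
        ≤ ENNReal.ofReal (Real.sqrt (2*Real.pi)) * (ENNReal.ofReal (2/c))^k := by
  intro k
  induction k with
  | zero =>
    intro w
    simp only [pow_zero, mul_one]
    have mp := (volume_preserving_funUnique (Fin 1) ℝ).symm
    change ∫⁻ (x : Fin 1 → ℝ), _ ≤ _
    refine (mp.lintegral_comp (meas_F 1 a c (2*a) w)).symm.trans_le ?_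
    simp only [MeasurableEquiv.funUnique_symm_apply]
    have h1 : ∀ t : ℝ, (∑ i : Fin 1, |(fun _ => t) i|) = |t| := by
      intro t; simp
    have h2 : ∀ t : ℝ, (∑ i : Fin 1, (fun _ : Fin 1 => t) i) = t := by
      intro t; simp
    calc ∫⁻ t : ℝ, ENNReal.ofReal ((Real.sqrt a)⁻¹
            * Real.exp (-(c * ∑ i : Fin 1, |(fun _ => t) i|))
            * Real.exp (-((∑ i : Fin 1, (fun _ : Fin 1 => t) i) - w)^2 / (2*a)))
        ≤ ∫⁻ t : ℝ, ENNReal.ofReal ((Real.sqrt a)⁻¹ * Real.exp (-(t - w)^2 / (2*a))) := by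
          apply lintegral_mono
          intro t
          apply ENNReal.ofReal_le_ofReal
          rw [h1, h2]
          have : Real.exp (-(c * |t|)) ≤ 1 := Real.exp_le_one_iff.mpr (neg_nonpos.mpr (by positivity))
          calc (Real.sqrt a)⁻¹ * Real.exp (-(c * |t|)) * Real.exp (-(t - w)^2 / (2*a))
              ≤ (Real.sqrt a)⁻¹ * 1 * Real.exp (-(t - w)^2 / (2*a)) := by
                apply mul_le_mul_of_nonneg_right _ (Real.exp_pos _).le
                apply mul_le_mul_of_nonneg_left this (by positivity)
            _ = (Real.sqrt a)⁻¹ * Real.exp (-(t - w)^2 / (2*a)) := by ring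
      _ = ENNReal.ofReal (Real.sqrt (2*Real.pi)) := gauss_lintegral a ha w
  | succ k ih =>
    intro w
    have mp := (measurePreserving_piFinSuccAbove (fun _ : Fin (k+2) => (volume : Measure ℝ)) 0).symm
    have hmeas := meas_F (k+2) a c (2*a) w
    rw [volume_pi, ← mp.lintegral_comp hmeas]
    have hae : AEMeasurable (fun p : ℝ × (Fin (k+1) → ℝ) => ENNReal.ofReal ((Real.sqrt a)⁻¹
            * Real.exp (-(c * ∑ i, |((MeasurableEquiv.piFinSuccAbove (fun _ : Fin (k+2) => ℝ) 0).symm p) i|))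
            * Real.exp (-((∑ i, ((MeasurableEquiv.piFinSuccAbove (fun _ : Fin (k+2) => ℝ) 0).symm p) i) - w)^2 / (2*a))))
        ((volume : Measure ℝ).prod (Measure.pi fun _ : Fin (k+1) => (volume : Measure ℝ))) := by
      exact (hmeas.comp (MeasurableEquiv.piFinSuccAbove (fun _ : Fin (k+2) => ℝ) 0).symm.measurable).aemeasurable
    rw [lintegral_prod _ hae]
    have hsymm : ∀ (t : ℝ) (y : Fin (k+1) → ℝ),
        (MeasurableEquiv.piFinSuccAbove (fun _ : Fin (k+2) => ℝ) 0).symm (t, y) = Fin.cons t y := by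
      intro t y
      simp [MeasurableEquiv.piFinSuccAbove_symm_apply, Fin.insertNthEquiv, Fin.insertNth_zero]
    have hpt : ∀ (t : ℝ) (y : Fin (k+1) → ℝ),
        ((Real.sqrt a)⁻¹ * Real.exp (-(c * ∑ i, |Fin.cons t y i|))
          * Real.exp (-((∑ i, Fin.cons t y i) - w)^2 / (2*a)))
        = Real.exp (-(c * |t|)) * ((Real.sqrt a)⁻¹ * Real.exp (-(c * ∑ i, |y i|))
          * Real.exp (-((∑ i, y i) - (w - t))^2 / (2*a))) := by
      intro t y
      have hs1 : (∑ i, |Fin.cons t y i|) = |t| + ∑ i, |y i| := by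
        rw [Fin.sum_univ_succ]
        simp [Fin.cons_zero, Fin.cons_succ]
      have hs2 : (∑ i, Fin.cons t y i) = t + ∑ i, y i := by
        rw [Fin.sum_univ_succ]
        simp [Fin.cons_zero, Fin.cons_succ]
      rw [hs1, hs2,
        show -(c * (|t| + ∑ i, |y i|)) = -(c * |t|) + -(c * ∑ i, |y i|) from by ring,
        Real.exp_add,
        show ((t + ∑ i, y i) - w) = ((∑ i, y i) - (w - t)) from by ring]
      ring
    calc (∫⁻ t : ℝ, ∫⁻ y : Fin (k+1) → ℝ, ENNReal.ofReal ((Real.sqrt a)⁻¹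
            * Real.exp (-(c * ∑ i, |((MeasurableEquiv.piFinSuccAbove (fun _ : Fin (k+2) => ℝ) 0).symm (t, y)) i|))
            * Real.exp (-((∑ i, ((MeasurableEquiv.piFinSuccAbove (fun _ : Fin (k+2) => ℝ) 0).symm (t, y)) i) - w)^2 / (2*a))))
        = ∫⁻ t : ℝ, ENNReal.ofReal (Real.exp (-(c * |t|)))
            * ∫⁻ y : Fin (k+1) → ℝ, ENNReal.ofReal ((Real.sqrt a)⁻¹
            * Real.exp (-(c * ∑ i, |y i|)) * Real.exp (-((∑ i, y i) - (w - t))^2 / (2*a))) := by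
          apply lintegral_congr
          intro t
          rw [← lintegral_const_mul _ (meas_F (k+1) a c (2*a) (w - t))]
          apply lintegral_congr
          intro y
          rw [hsymm t y, hpt t y, ENNReal.ofReal_mul (Real.exp_pos _).le]
      _ ≤ ∫⁻ t : ℝ, ENNReal.ofReal (Real.exp (-(c * |t|)))
            * (ENNReal.ofReal (Real.sqrt (2*Real.pi)) * (ENNReal.ofReal (2/c))^k) := by
          apply lintegral_mono
          intro t
          exact mul_le_mul_right (ih (w - t)) _
      _ = (∫⁻ t : ℝ, ENNReal.ofReal (Real.exp (-(c * |t|))))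
            * (ENNReal.ofReal (Real.sqrt (2*Real.pi)) * (ENNReal.ofReal (2/c))^k) := by
          rw [lintegral_mul_const]
          exact ENNReal.measurable_ofReal.comp (Continuous.measurable (by fun_prop))
      _ = ENNReal.ofReal (Real.sqrt (2*Real.pi)) * (ENNReal.ofReal (2/c))^(k+1) := by
          rw [lap_lintegral c hc, pow_succ]
          ring

/-- Lemma 4.2: iterated Laplace–Gaussian convolution bound. -/
theorem iterated_laplace_gaussian_convolution_bound
    (a : ℕ → ℝ) (ha_pos : ∀ n, 0 < a n)
    (ha_dec : ∀ m n, m ≤ n → a n ≤ a m)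
    (ha_lim : Filter.Tendsto a Filter.atTop (nhds 0))
    (u : ℝ) (hu : 0 < u)
    (b : ℕ → ℝ) (hb_pos : ∀ k, 0 < b k)
    (hb_dec : ∀ m n, m ≤ n → b n ≤ b m) (hb1 : b 1 < 1)
    (ζ : ℝ) (hζ : 0 < ζ)
    (hb_lim : Filter.Tendsto b Filter.atTop (nhds ζ)) :
    ∃ C > (0 : ℝ), ∃ N : ℕ, ∀ n ≥ N, ∀ k : ℕ, 1 ≤ k → ∀ z : ℝ,
      (∫ x : Fin k → ℝ, (Real.sqrt (a n))⁻¹ *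
            Real.exp (-u * ∑ i, |x i|) *
            Real.exp (-((∑ i, x i) - z) ^ 2 / a n)
          ≤ C ^ k * Real.exp (-u * b k * |z|)) ∧
      (∫ x : Fin k → ℝ, (Real.sqrt (a n))⁻¹ *
            Real.exp (-u * ∑ i, |x i|) *
            Real.exp (-((∑ i, x i) - z) ^ 2 / a n)
          ≤ C ^ k * Real.exp (-u * ζ * |z|)) := by
  have hev : ∀ᶠ n in Filter.atTop, a n < 1 :=
    ha_lim.eventually (gt_mem_nhds (by norm_num : (0:ℝ) < 1))
  obtain ⟨N, hN⟩ := Filter.eventually_atTop.mp hev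
  set S : ℝ := Real.sqrt (2*Real.pi) * Real.exp (u^2/2) with hS
  set M : ℝ := max 1 (2/(u*(1 - b 1))) with hM
  have hSpos : 0 < S := by positivity
  have hM1 : (1:ℝ) ≤ M := le_max_left _ _
  refine ⟨(S+1)*M, by nlinarith, N, ?_⟩
  intro n hn k hk z
  have hβ1 : b k < 1 := lt_of_le_of_lt (hb_dec 1 k hk) hb1
  have hβb1 : b k ≤ b 1 := hb_dec 1 k hk
  have hβ0 : 0 < b k := hb_pos k
  have hζk : ζ ≤ b k :=
    le_of_tendsto hb_lim (Filter.eventually_atTop.mpr ⟨k, fun m hm => hb_dec k m hm⟩)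
  have hA1 : a n ≤ 1 := (hN n hn).le
  have hA0 : 0 < a n := ha_pos n
  have hcpos : 0 < u * (1 - b k) := by nlinarith
  obtain ⟨m, rfl⟩ : ∃ m, k = m + 1 := ⟨k - 1, by omega⟩
  set A := a n with hA
  set β := b (m+1) with hβ
  set c : ℝ := u * (1 - β) with hc
  set K : ℝ := Real.exp (u^2/2) * Real.exp (-(u * β * |z|)) with hK
  have hKpos : 0 < K := by positivity
  -- pointwise bound
  have hpt : ∀ x : Fin (m+1) → ℝ,
      (Real.sqrt A)⁻¹ * Real.exp (-u * ∑ i, |x i|) * Real.exp (-((∑ i, x i) - z)^2 / A)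
      ≤ K * ((Real.sqrt A)⁻¹ * Real.exp (-(c * ∑ i, |x i|))
          * Real.exp (-((∑ i, x i) - z)^2 / (2*A))) := by
    intro x
    set S₁ := ∑ i, |x i| with hS₁
    set D := (∑ i, x i) - z with hD
    have habs : |∑ i, x i| ≤ S₁ := Finset.abs_sum_le_sum_abs _ _
    have hz : |z| ≤ S₁ + |D| := by
      calc |z| = |(∑ i, x i) - D| := by rw [hD]; ring_nf
        _ ≤ |∑ i, x i| + |D| := abs_sub _ _
        _ ≤ S₁ + |D| := by linarith
    have hQ : 0 ≤ D^2/(2*A) := by positivity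
    have key : u * β * |D| ≤ u^2/2 + D^2/(2*A) := by
      have h1 : 0 ≤ (|D| - u*β*A)^2 := sq_nonneg _
      have h2 : |D|^2 = D^2 := sq_abs D
      have h3 : 2*(u*β*|D|)*A ≤ D^2 + u^2*β^2*A^2 := by nlinarith [abs_nonneg D]
      have h4 : u*β*|D| ≤ D^2/(2*A) + u^2*β^2*A/2 := by
        rw [← sub_nonneg]
        have : D^2/(2*A) + u^2*β^2*A/2 - u*β*|D|
            = (D^2 + u^2*β^2*A^2 - 2*(u*β*|D|)*A) / (2*A) := by field_simp
        rw [this]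
        apply div_nonneg (by linarith) (by positivity)
      have h5 : u^2*β^2*A/2 ≤ u^2/2 := by
        have hb2 : β^2 * A ≤ 1 := by nlinarith
        nlinarith [sq_nonneg u]
      linarith
    have harith : -u * S₁ + (-D^2 / A)
        ≤ (u^2/2 + -(u * β * |z|)) + (-(c * S₁) + -(D^2/(2*A))) := by
      have hDA : D^2/A = 2*(D^2/(2*A)) := by field_simp
      have hz2 : u * β * |z| ≤ u * β * S₁ + u * β * |D| := by
        have h := mul_le_mul_of_nonneg_left hz (by positivity : (0:ℝ) ≤ u * β)
        rw [mul_add] at h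
        linarith
      have hc' : c = u * (1 - β) := hc
      have hexp : -(c * S₁) = -u * S₁ + u * β * S₁ := by rw [hc']; ring
      have hSnn : 0 ≤ S₁ := by
        rw [hS₁]; exact Finset.sum_nonneg fun i _ => abs_nonneg _
      have h6 : -D^2/A = -(D^2/(2*A)) - (D^2/(2*A)) := by
        rw [neg_div, hDA]; ring
      rw [hexp, h6]
      linarith
    calc (Real.sqrt A)⁻¹ * Real.exp (-u * S₁) * Real.exp (-D^2 / A)
        = (Real.sqrt A)⁻¹ * Real.exp (-u * S₁ + (-D^2 / A)) := by
          rw [Real.exp_add]; ring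
      _ ≤ (Real.sqrt A)⁻¹ * Real.exp ((u^2/2 + -(u * β * |z|)) + (-(c * S₁) + -(D^2/(2*A)))) := by
          apply mul_le_mul_of_nonneg_left (Real.exp_le_exp.mpr harith) (by positivity)
      _ = K * ((Real.sqrt A)⁻¹ * Real.exp (-(c * S₁)) * Real.exp (-D^2 / (2*A))) := by
          rw [hK, Real.exp_add, Real.exp_add, Real.exp_add, neg_div]
          ring
  -- integral bound
  have hclt : c = u * (1 - β) := hc
  have hc0 : 0 < c := by rw [hclt]; exact hcpos
  have hf_meas : AEStronglyMeasurable (fun x : Fin (m+1) → ℝ =>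
      (Real.sqrt A)⁻¹ * Real.exp (-u * ∑ i, |x i|) * Real.exp (-((∑ i, x i) - z)^2 / A))
      (volume : Measure (Fin (m+1) → ℝ)) := Continuous.aestronglyMeasurable (by fun_prop)
  have hmain : (∫ x : Fin (m+1) → ℝ, (Real.sqrt A)⁻¹ *
        Real.exp (-u * ∑ i, |x i|) * Real.exp (-((∑ i, x i) - z) ^ 2 / A))
      ≤ ((S+1)*M) ^ (m+1) * Real.exp (-u * β * |z|) := by
    rw [integral_eq_lintegral_of_nonneg_ae
      (Filter.Eventually.of_forall fun x => by positivity) hf_meas]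
    have hlin : (∫⁻ x : Fin (m+1) → ℝ, ENNReal.ofReal ((Real.sqrt A)⁻¹ *
          Real.exp (-u * ∑ i, |x i|) * Real.exp (-((∑ i, x i) - z) ^ 2 / A)))
        ≤ ENNReal.ofReal (K * (Real.sqrt (2*Real.pi) * (2/c)^m)) := by
      calc (∫⁻ x : Fin (m+1) → ℝ, ENNReal.ofReal ((Real.sqrt A)⁻¹ *
            Real.exp (-u * ∑ i, |x i|) * Real.exp (-((∑ i, x i) - z) ^ 2 / A)))
          ≤ ∫⁻ x : Fin (m+1) → ℝ, ENNReal.ofReal (K * ((Real.sqrt A)⁻¹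
              * Real.exp (-(c * ∑ i, |x i|)) * Real.exp (-((∑ i, x i) - z)^2 / (2*A)))) :=
            lintegral_mono fun x => ENNReal.ofReal_le_ofReal (hpt x)
        _ = ENNReal.ofReal K * ∫⁻ x : Fin (m+1) → ℝ, ENNReal.ofReal ((Real.sqrt A)⁻¹
              * Real.exp (-(c * ∑ i, |x i|)) * Real.exp (-((∑ i, x i) - z)^2 / (2*A))) := by
            simp_rw [ENNReal.ofReal_mul hKpos.le]
            rw [lintegral_const_mul _ (meas_F (m+1) A c (2*A) z)]
        _ ≤ ENNReal.ofReal K *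
              (ENNReal.ofReal (Real.sqrt (2*Real.pi)) * (ENNReal.ofReal (2/c))^m) :=
            mul_le_mul_right (core A c hA0 hc0 m z) _
        _ = ENNReal.ofReal (K * (Real.sqrt (2*Real.pi) * (2/c)^m)) := by
            rw [← ENNReal.ofReal_pow (by positivity), ← ENNReal.ofReal_mul (by positivity),
              ← ENNReal.ofReal_mul hKpos.le]
    have htr := ENNReal.toReal_le_of_le_ofReal (by positivity) hlin
    refine htr.trans ?_
    -- real arithmetic
    have h2c : 2/c ≤ M := by
      have hcb : u * (1 - b 1) ≤ c := by rw [hclt]; nlinarith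
      have : 2/c ≤ 2/(u*(1 - b 1)) :=
        div_le_div_of_nonneg_left (by norm_num) (by nlinarith) hcb
      exact this.trans (le_max_right _ _)
    have hpow : (2/c)^m ≤ M^m := pow_le_pow_left₀ (by positivity) h2c m
    have hpow2 : M^m ≤ M^(m+1) := pow_le_pow_right₀ hM1 (Nat.le_succ m)
    have hs : S ≤ (S+1)^(m+1) :=
      le_trans (by linarith) (le_self_pow₀ (by linarith) (Nat.succ_ne_zero m))
    have hfin : Real.exp (u^2/2) * (Real.sqrt (2*Real.pi) * (2/c)^m) ≤ ((S+1)*M)^(m+1) := by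
      rw [mul_pow]
      calc Real.exp (u^2/2) * (Real.sqrt (2*Real.pi) * (2/c)^m)
          = S * (2/c)^m := by rw [hS]; ring
        _ ≤ (S+1)^(m+1) * M^(m+1) := by
            apply mul_le_mul hs (hpow.trans hpow2) (by positivity) (by positivity)
    calc K * (Real.sqrt (2*Real.pi) * (2/c)^m)
        = (Real.exp (u^2/2) * (Real.sqrt (2*Real.pi) * (2/c)^m)) * Real.exp (-(u * β * |z|)) := by
          rw [hK]; ring
      _ ≤ ((S+1)*M)^(m+1) * Real.exp (-(u * β * |z|)) := by
          apply mul_le_mul_of_nonneg_right hfin (Real.exp_pos _).le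
      _ = ((S+1)*M)^(m+1) * Real.exp (-u * β * |z|) := by ring_nf
  refine ⟨hmain, hmain.trans ?_⟩
  apply mul_le_mul_of_nonneg_left _ (by positivity)
  apply Real.exp_le_exp.mpr
  nlinarith [mul_nonneg (mul_nonneg hu.le (sub_nonneg.mpr hζk)) (abs_nonneg z)]
end

section
/- Let C ≥ 1 and h ∈ (0,1]. Suppose (p_t)_{t∈(0,1]} is a family of measurable functions p_t : ℝ × ℝ → [0,∞) satisfying the Aronson-type upper bound p_t(x,y) ≤ C·t^{-1/2}·exp(-(y-x)²/(C·t)) for all t ∈ (0,1] and x, y ∈ ℝ. Then there exists a constant C' > 0, depending only on C, such that for every k ≥ 1, every choice of times 0 < τ_1 < τ_2 < ⋯ < τ_k < h, every x, y ∈ ℝ and every x_2, x_4, …, x_{2k} ∈ ℝ: ∫_{ℝ^k} p_{τ_1}(x, x_1) · (∏_{i=1}^{k-1} p_{τ_{i+1}-τ_i}(x_{2i-1}+x_{2i}, x_{2i+1})) · p_{h-τ_k}(x_{2k-1}+x_{2k}, y) dx_1 dx_3 ⋯ dx_{2k-1} ≤ (C')^{k+1} · h^{-1/2} · exp(-(Σ_{i=1}^k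 x_{2i} - (y - x))²/(C'·h)). -/
open MeasureTheory Real


noncomputable def Gk (C t x y : ℝ) : ℝ := (Real.sqrt t)⁻¹ * Real.exp (-(y - x)^2 / (C * t))

lemma Gk_nonneg (C t x y : ℝ) : 0 ≤ Gk C t x y :=
  mul_nonneg (inv_nonneg.2 (Real.sqrt_nonneg _)) (Real.exp_pos _).le

lemma Gk_key {C t s : ℝ} (hC : 0 < C) (ht : 0 < t) (hs : 0 < s) (x e y w : ℝ) :
    Gk C t x w * Gk C s (w + e) y =
      ((Real.sqrt t)⁻¹ * (Real.sqrt s)⁻¹ * Real.exp (-(y - e - x)^2 / (C * (t + s)))) *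
        Real.exp (-((t + s)/(C * t * s)) * (w - (s * x + t * (y - e))/(t + s))^2) := by
  unfold Gk
  rw [mul_mul_mul_comm, ← Real.exp_add, mul_assoc ((Real.sqrt t)⁻¹*(Real.sqrt s)⁻¹), ← Real.exp_add]
  congr 2
  have h1 : C * t ≠ 0 := by positivity
  have h2 : C * s ≠ 0 := by positivity
  have h3 : C * (t + s) ≠ 0 := by positivity
  have h4 : C * t * s ≠ 0 := by positivity
  have h5 : t + s ≠ 0 := by positivity
  field_simp
  ring

lemma Gk_integrable {C t s : ℝ} (hC : 0 < C) (ht : 0 < t) (hs : 0 < s) (x e y : ℝ) :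
    Integrable (fun w => Gk C t x w * Gk C s (w + e) y) := by
  have hc : 0 < (t + s)/(C * t * s) := by positivity
  have : (fun w => Gk C t x w * Gk C s (w + e) y) =
      fun w => ((Real.sqrt t)⁻¹ * (Real.sqrt s)⁻¹ * Real.exp (-(y - e - x)^2 / (C * (t + s)))) *
        Real.exp (-((t + s)/(C * t * s)) * (w - (s * x + t * (y - e))/(t + s))^2) := by
    funext w; exact Gk_key hC ht hs x e y w
  rw [this]
  exact (((integrable_exp_neg_mul_sq hc).comp_sub_right _).const_mul _)

lemma Gk_conv {C t s : ℝ} (hC : 0 < C) (ht : 0 < t) (hs : 0 < s) (x e y : ℝ) :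
    ∫ w, Gk C t x w * Gk C s (w + e) y = Real.sqrt (Real.pi * C) * Gk C (t + s) (x + e) y := by
  have hc : 0 < (t + s)/(C * t * s) := by positivity
  have hts : (0:ℝ) < t + s := by positivity
  simp_rw [fun w => Gk_key hC ht hs x e y w]
  rw [integral_const_mul]
  rw [show (fun w : ℝ => Real.exp (-((t + s)/(C * t * s)) * (w - (s * x + t * (y - e))/(t + s))^2))
      = fun w : ℝ => (fun u => Real.exp (-((t + s)/(C * t * s)) * u ^ 2)) (w - (s * x + t * (y - e))/(t + s)) from rfl,
    integral_sub_right_eq_self (fun u => Real.exp (-((t + s)/(C * t * s)) * u ^ 2)) _,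
    integral_gaussian]
  unfold Gk
  have hst : Real.sqrt t ≠ 0 := ne_of_gt (Real.sqrt_pos.2 ht)
  have hss : Real.sqrt s ≠ 0 := ne_of_gt (Real.sqrt_pos.2 hs)
  have hsts : Real.sqrt (t + s) ≠ 0 := ne_of_gt (Real.sqrt_pos.2 hts)
  have h1 : Real.sqrt (Real.pi / ((t + s)/(C * t * s))) = Real.sqrt (Real.pi * C) * Real.sqrt t * Real.sqrt s / Real.sqrt (t + s) := by
    rw [eq_div_iff hsts, ← Real.sqrt_mul (by positivity), ← Real.sqrt_mul (by positivity),
      ← Real.sqrt_mul (by positivity)]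
    congr 1
    field_simp
  rw [h1]
  have hexp : (y - e - x)^2 = (y - (x + e))^2 := by ring
  rw [hexp]
  field_simp

lemma Gk_measurable (C t : ℝ) : Measurable fun q : ℝ × ℝ => Gk C t q.1 q.2 := by
  unfold Gk
  fun_prop

lemma Gk_lconv {C t s : ℝ} (hC : 0 < C) (ht : 0 < t) (hs : 0 < s) (x e y : ℝ) :
    ∫⁻ w, ENNReal.ofReal (Gk C t x w) * ENNReal.ofReal (Gk C s (w + e) y) =
      ENNReal.ofReal (Real.sqrt (Real.pi * C)) * ENNReal.ofReal (Gk C (t + s) (x + e) y) := by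
  have : ∀ w : ℝ, ENNReal.ofReal (Gk C t x w) * ENNReal.ofReal (Gk C s (w + e) y)
      = ENNReal.ofReal (Gk C t x w * Gk C s (w + e) y) :=
    fun w => (ENNReal.ofReal_mul (Gk_nonneg _ _ _ _)).symm
  simp_rw [this]
  rw [← ofReal_integral_eq_lintegral_ofReal (Gk_integrable hC ht hs x e y)
      (Filter.Eventually.of_forall fun w => mul_nonneg (Gk_nonneg _ _ _ _) (Gk_nonneg _ _ _ _)),
    Gk_conv hC ht hs x e y, ENNReal.ofReal_mul (Real.sqrt_nonneg _)]

lemma Gk_comp_measurable {α : Type*} [MeasurableSpace α] (C s : ℝ) {u v : α → ℝ}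
    (hu : Measurable u) (hv : Measurable v) :
    Measurable fun w => ENNReal.ofReal (Gk C s (u w) (v w)) :=
  ((Gk_measurable C s).comp (hu.prodMk hv)).ennreal_ofReal

lemma Gk_chain {C : ℝ} (hC : 0 < C) :
    ∀ (k : ℕ) (t : Fin (k+2) → ℝ), (∀ i, 0 < t i) → ∀ (x y : ℝ) (e : Fin (k+1) → ℝ),
    (∫⁻ w : Fin (k+1) → ℝ,
        ENNReal.ofReal (Gk C (t 0) x (w 0)) *
          (∏ i : Fin k, ENNReal.ofReal
            (Gk C (t i.succ.castSucc) (w i.castSucc + e i.castSucc) (w i.succ))) *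
          ENNReal.ofReal (Gk C (t (Fin.last (k+1))) (w (Fin.last k) + e (Fin.last k)) y))
      = ENNReal.ofReal (Real.sqrt (Real.pi * C)) ^ (k+1) *
          ENNReal.ofReal (Gk C (∑ i, t i) (x + ∑ i, e i) y) := by
  intro k
  induction k with
  | zero =>
    intro t htpos x y e
    have hcongr : ∀ w : Fin 1 → ℝ,
        ENNReal.ofReal (Gk C (t 0) x (w 0)) *
          (∏ i : Fin 0, ENNReal.ofReal
            (Gk C (t i.succ.castSucc) (w i.castSucc + e i.castSucc) (w i.succ))) *
          ENNReal.ofReal (Gk C (t (Fin.last 1)) (w (Fin.last 0) + e (Fin.last 0)) y)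
        = (fun a : ℝ => ENNReal.ofReal (Gk C (t 0) x a) *
            ENNReal.ofReal (Gk C (t (Fin.last 1)) (a + e (Fin.last 0)) y))
            ((MeasurableEquiv.funUnique (Fin 1) ℝ) w) := by
      intro w; simp
    calc ∫⁻ w : Fin 1 → ℝ,
        ENNReal.ofReal (Gk C (t 0) x (w 0)) *
          (∏ i : Fin 0, ENNReal.ofReal
            (Gk C (t i.succ.castSucc) (w i.castSucc + e i.castSucc) (w i.succ))) *
          ENNReal.ofReal (Gk C (t (Fin.last 1)) (w (Fin.last 0) + e (Fin.last 0)) y)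
        = ∫⁻ w : Fin 1 → ℝ, (fun a : ℝ => ENNReal.ofReal (Gk C (t 0) x a) *
            ENNReal.ofReal (Gk C (t (Fin.last 1)) (a + e (Fin.last 0)) y))
            ((MeasurableEquiv.funUnique (Fin 1) ℝ) w) := lintegral_congr hcongr
      _ = ∫⁻ a : ℝ, ENNReal.ofReal (Gk C (t 0) x a) *
            ENNReal.ofReal (Gk C (t (Fin.last 1)) (a + e (Fin.last 0)) y) := by
          exact ((measurePreserving_funUnique (volume : Measure ℝ) (Fin 1)).lintegral_map_equiv
            (fun a : ℝ => ENNReal.ofReal (Gk C (t 0) x a) *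
              ENNReal.ofReal (Gk C (t (Fin.last 1)) (a + e (Fin.last 0)) y))
            (MeasurableEquiv.funUnique (Fin 1) ℝ)).symm
      _ = ENNReal.ofReal (Real.sqrt (Real.pi * C)) ^ (0+1) *
          ENNReal.ofReal (Gk C (∑ i, t i) (x + ∑ i, e i) y) := by
          rw [Gk_lconv hC (htpos 0) (htpos (Fin.last 1))]
          simp [Fin.sum_univ_two, Fin.sum_univ_one, show (Fin.last 1 : Fin 2) = 1 from rfl]
  | succ n ih =>
    intro t htpos x y e
    set F : (Fin (n+2) → ℝ) → ENNReal := fun w =>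
      ENNReal.ofReal (Gk C (t 0) x (w 0)) *
        (∏ i : Fin (n+1), ENNReal.ofReal
          (Gk C (t i.succ.castSucc) (w i.castSucc + e i.castSucc) (w i.succ))) *
        ENNReal.ofReal (Gk C (t (Fin.last (n+2))) (w (Fin.last (n+1)) + e (Fin.last (n+1))) y)
      with hF
    have hFm : Measurable F := by
      refine Measurable.mul (Measurable.mul ?_ ?_) ?_
      · exact Gk_comp_measurable _ _ measurable_const (measurable_pi_apply 0)
      · exact Finset.measurable_prod _ fun i _ =>
          Gk_comp_measurable _ _ ((measurable_pi_apply _).add_const _) (measurable_pi_apply _)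
      · exact Gk_comp_measurable _ _ ((measurable_pi_apply _).add_const _) measurable_const
    have hcons : Measurable fun z : ℝ × (Fin (n+1) → ℝ) => (Fin.cons z.1 z.2 : Fin (n+2) → ℝ) := by
      rw [measurable_pi_iff]
      intro j
      induction j using Fin.cases with
      | zero => simpa using measurable_fst
      | succ i => simp; exact (measurable_pi_apply i).comp measurable_snd
    have mp := measurePreserving_piFinSuccAbove (fun _ : Fin (n+2) => (volume : Measure ℝ)) 0
    have hg : Measurable fun z : ℝ × (Fin (n+1) → ℝ) => F (Fin.cons z.1 z.2) := hFm.comp hcons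
    have hEw : ∀ w : Fin (n+2) → ℝ,
        (Fin.cons (w 0) (fun j => w ((0 : Fin (n+2)).succAbove j)) : Fin (n+2) → ℝ) = w := by
      intro w
      simp only [Fin.succAbove_zero]
      exact Fin.cons_self_tail w
    have step1 : (∫⁻ w : Fin (n+2) → ℝ, F w)
        = ∫⁻ a : ℝ, ∫⁻ v : Fin (n+1) → ℝ, F (Fin.cons a v) := by
      calc (∫⁻ w : Fin (n+2) → ℝ, F w)
          = ∫⁻ w : Fin (n+2) → ℝ, (fun z : ℝ × (Fin (n+1) → ℝ) => F (Fin.cons z.1 z.2))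
              ((MeasurableEquiv.piFinSuccAbove (fun _ : Fin (n+2) => ℝ) 0) w) :=
            lintegral_congr fun w => (congrArg F (hEw w)).symm
        _ = ∫⁻ z : ℝ × (Fin (n+1) → ℝ),
              (fun z : ℝ × (Fin (n+1) → ℝ) => F (Fin.cons z.1 z.2)) z
              ∂((volume : Measure ℝ).prod (Measure.pi fun _ => (volume : Measure ℝ))) :=
            mp.lintegral_comp hg
        _ = ∫⁻ a : ℝ, ∫⁻ v : Fin (n+1) → ℝ, F (Fin.cons a v)
              ∂(Measure.pi fun _ => (volume : Measure ℝ)) ∂(volume : Measure ℝ) :=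
            lintegral_prod _ hg.aemeasurable
        _ = ∫⁻ a : ℝ, ∫⁻ v : Fin (n+1) → ℝ, F (Fin.cons a v) := rfl
    have key : ∀ (a : ℝ) (v : Fin (n+1) → ℝ), F (Fin.cons a v) =
        ENNReal.ofReal (Gk C (t 0) x a) *
          (ENNReal.ofReal (Gk C ((fun i : Fin (n+2) => t i.succ) 0) (a + e 0) (v 0)) *
            (∏ i : Fin n, ENNReal.ofReal
              (Gk C ((fun i : Fin (n+2) => t i.succ) i.succ.castSucc)
                (v i.castSucc + (fun i : Fin (n+1) => e i.succ) i.castSucc) (v i.succ))) *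
            ENNReal.ofReal (Gk C ((fun i : Fin (n+2) => t i.succ) (Fin.last (n+1)))
              (v (Fin.last n) + (fun i : Fin (n+1) => e i.succ) (Fin.last n)) y)) := by
      intro a v
      simp only [hF, Fin.prod_univ_succ, Fin.cons_zero, Fin.castSucc_zero, Fin.cons_succ,
        ← Fin.succ_castSucc, ← Fin.succ_last]
      ring
    have hsum : (0:ℝ) < ∑ i : Fin (n+2), t i.succ :=
      Finset.sum_pos (fun i _ => htpos i.succ) Finset.univ_nonempty
    calc (∫⁻ w : Fin (n+2) → ℝ, F w)
        = ∫⁻ a : ℝ, ∫⁻ v : Fin (n+1) → ℝ, F (Fin.cons a v) := step1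
      _ = ∫⁻ a : ℝ, ENNReal.ofReal (Gk C (t 0) x a) *
            (ENNReal.ofReal (Real.sqrt (Real.pi * C)) ^ (n+1) *
              ENNReal.ofReal (Gk C (∑ i : Fin (n+2), t i.succ)
                ((a + e 0) + ∑ i : Fin (n+1), e i.succ) y)) := by
          refine lintegral_congr fun a => ?_
          simp_rw [key a]
          rw [lintegral_const_mul _ (by
            refine Measurable.mul (Measurable.mul ?_ ?_) ?_
            · exact Gk_comp_measurable _ _ measurable_const (measurable_pi_apply 0)
            · exact Finset.measurable_prod _ fun i _ =>
                Gk_comp_measurable _ _ ((measurable_pi_apply _).add_const _) (measurable_pi_apply _)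
            · exact Gk_comp_measurable _ _ ((measurable_pi_apply _).add_const _) measurable_const)]
          rw [ih (fun i => t i.succ) (fun i => htpos i.succ) (a + e 0) y (fun i => e i.succ)]
      _ = ENNReal.ofReal (Real.sqrt (Real.pi * C)) ^ (n+1) *
            ∫⁻ a : ℝ, ENNReal.ofReal (Gk C (t 0) x a) *
              ENNReal.ofReal (Gk C (∑ i : Fin (n+2), t i.succ)
                (a + (e 0 + ∑ i : Fin (n+1), e i.succ)) y) := by
          rw [← lintegral_const_mul' _ _ (ENNReal.pow_ne_top ENNReal.ofReal_ne_top)]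
          refine lintegral_congr fun a => ?_
          rw [← add_assoc]
          ring
      _ = ENNReal.ofReal (Real.sqrt (Real.pi * C)) ^ (n+1+1) *
          ENNReal.ofReal (Gk C (∑ i, t i) (x + ∑ i, e i) y) := by
          rw [Gk_lconv hC (htpos 0) hsum]
          rw [Fin.sum_univ_succ t, Fin.sum_univ_succ e]
          ring

/-- Chained Gaussian kernel integral bound from the proof of Theorem 2.1.
The number of jumps is `k + 1` (so this covers every number of jumps `≥ 1`);
`τ` are the ordered jump times, `e i` are the (fixed) even-indexed variables
`x_{2(i+1)}` and the integration runs over the odd-indexed variables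
`w i = x_{2i+1}`. -/
theorem chained_kernel_integral_bound (C : ℝ) (hC : 1 ≤ C) :
    ∃ C' > (0 : ℝ), ∀ p : ℝ → ℝ → ℝ → ℝ,
      (∀ t ∈ Set.Ioc (0 : ℝ) 1, Measurable fun q : ℝ × ℝ => p t q.1 q.2) →
      (∀ t ∈ Set.Ioc (0 : ℝ) 1, ∀ x y : ℝ, 0 ≤ p t x y) →
      (∀ t ∈ Set.Ioc (0 : ℝ) 1, ∀ x y : ℝ,
        p t x y ≤ C * (Real.sqrt t)⁻¹ * Real.exp (-(y - x) ^ 2 / (C * t))) →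
      ∀ h ∈ Set.Ioc (0 : ℝ) 1, ∀ (k : ℕ) (τ : Fin (k + 1) → ℝ),
        StrictMono τ → 0 < τ 0 → τ (Fin.last k) < h →
        ∀ (x y : ℝ) (e : Fin (k + 1) → ℝ),
          ∫ w : Fin (k + 1) → ℝ,
              p (τ 0) x (w 0) *
                (∏ i : Fin k,
                  p (τ i.succ - τ i.castSucc) (w i.castSucc + e i.castSucc) (w i.succ)) *
                p (h - τ (Fin.last k)) (w (Fin.last k) + e (Fin.last k)) y
            ≤ C' ^ ((k + 1) + 1) * (Real.sqrt h)⁻¹ *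
                Real.exp (-((∑ i, e i) - (y - x)) ^ 2 / (C' * h)) := by
  have hCpos : (0:ℝ) < C := lt_of_lt_of_le one_pos hC
  have hpiC : (1:ℝ) ≤ Real.pi * C := by nlinarith [Real.pi_gt_three]
  refine ⟨Real.pi * C^2, by positivity, ?_⟩
  intro p hpm hpn hpb h hh k τ hmono hτ0 hτh x y e
  -- the increments
  set t : Fin (k+2) → ℝ := Fin.cons (τ 0)
    (Fin.snoc (fun i : Fin k => τ i.succ - τ i.castSucc) (h - τ (Fin.last k))) with htdef
  have ht0 : t 0 = τ 0 := rfl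
  have htmid : ∀ i : Fin k, t i.succ.castSucc = τ i.succ - τ i.castSucc := by
    intro i
    rw [htdef, ← Fin.succ_castSucc, Fin.cons_succ, Fin.snoc_castSucc]
  have htlast : t (Fin.last (k+1)) = h - τ (Fin.last k) := by
    rw [htdef, ← Fin.succ_last, Fin.cons_succ, Fin.snoc_last]
  have htpos : ∀ i, 0 < t i := by
    intro i
    induction i using Fin.cases with
    | zero => exact hτ0
    | succ j =>
      induction j using Fin.lastCases with
      | last =>
        have hls : (Fin.last k).succ = Fin.last (k+1) := Fin.succ_last k
        rw [hls, htlast]; linarith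
      | cast m =>
        rw [Fin.succ_castSucc, htmid m]
        exact sub_pos.2 (hmono (Fin.castSucc_lt_succ (i := m)))
  have htel : ∑ i : Fin k, (τ i.succ - τ i.castSucc) = τ (Fin.last k) - τ 0 := by
    have hmin : ∀ j : ℕ, j ≤ k → min j k = j := fun j hj => min_eq_left hj
    have hs : ∑ i : Fin k, (τ i.succ - τ i.castSucc)
        = ∑ i : Fin k, ((fun j : ℕ => τ ⟨min (j+1) k, by omega⟩ - τ ⟨min j k, by omega⟩) : ℕ → ℝ) i.1 := by
      refine Finset.sum_congr rfl fun i _ => ?_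
      have h1 : (⟨min (i.1+1) k, by omega⟩ : Fin (k+1)) = i.succ := by
        ext; simp [hmin _ i.2]
      have h2 : (⟨min i.1 k, by omega⟩ : Fin (k+1)) = i.castSucc := by
        ext; simp [hmin _ (le_of_lt i.2)]
      simp only [h1, h2]
    rw [hs, Fin.sum_univ_eq_sum_range
        (fun j => τ ⟨min (j+1) k, by omega⟩ - τ ⟨min j k, by omega⟩) k]
    have := Finset.sum_range_sub (fun j : ℕ => τ ⟨min j k, by omega⟩) k
    rw [this]
    congr 2 <;> ext <;> simp
  have htsum : ∑ i, t i = h := by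
    rw [Fin.sum_univ_succ t]
    have : ∀ j : Fin (k+1), t j.succ =
        (Fin.snoc (fun i : Fin k => τ i.succ - τ i.castSucc) (h - τ (Fin.last k))
          : Fin (k+1) → ℝ) j := by
      intro j; rw [htdef, Fin.cons_succ]
    simp_rw [this]
    rw [Fin.sum_univ_castSucc
      ((Fin.snoc (fun i : Fin k => τ i.succ - τ i.castSucc) (h - τ (Fin.last k)))
        : Fin (k+1) → ℝ)]
    simp only [Fin.snoc_castSucc, Fin.snoc_last, ht0]
    rw [htel]; ring
  have htIoc : ∀ i, t i ∈ Set.Ioc (0:ℝ) 1 := by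
    intro i
    refine ⟨htpos i, ?_⟩
    calc t i ≤ ∑ j, t j := Finset.single_le_sum (fun j _ => (htpos j).le) (Finset.mem_univ i)
      _ = h := htsum
      _ ≤ 1 := hh.2
  set f : (Fin (k+1) → ℝ) → ℝ := fun w =>
    p (τ 0) x (w 0) *
      (∏ i : Fin k, p (τ i.succ - τ i.castSucc) (w i.castSucc + e i.castSucc) (w i.succ)) *
      p (h - τ (Fin.last k)) (w (Fin.last k) + e (Fin.last k)) y with hfdef
  have m0 : τ 0 ∈ Set.Ioc (0:ℝ) 1 := ht0 ▸ htIoc 0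
  have mmid : ∀ i : Fin k, τ i.succ - τ i.castSucc ∈ Set.Ioc (0:ℝ) 1 :=
    fun i => htmid i ▸ htIoc _
  have mlast : h - τ (Fin.last k) ∈ Set.Ioc (0:ℝ) 1 := htlast ▸ htIoc _
  have hf_nonneg : ∀ w, 0 ≤ f w := fun w =>
    mul_nonneg (mul_nonneg (hpn _ m0 _ _)
      (Finset.prod_nonneg fun i _ => hpn _ (mmid i) _ _)) (hpn _ mlast _ _)
  have hf_meas : Measurable f := by
    refine Measurable.mul (Measurable.mul ?_ ?_) ?_
    · exact (hpm _ m0).comp (measurable_const.prodMk (measurable_pi_apply 0))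
    · refine Finset.measurable_prod _ fun i _ => ?_
      have hmm : Measurable fun w : Fin (k+1) → ℝ =>
          ((w i.castSucc + e i.castSucc, w i.succ) : ℝ × ℝ) :=
        ((measurable_pi_apply _).add_const _).prodMk (measurable_pi_apply _)
      exact (hpm _ (mmid i)).comp hmm
    · have hmm : Measurable fun w : Fin (k+1) → ℝ =>
          ((w (Fin.last k) + e (Fin.last k), y) : ℝ × ℝ) :=
        ((measurable_pi_apply _).add_const _).prodMk measurable_const
      exact (hpm _ mlast).comp hmm
  have hGb : ∀ s ∈ Set.Ioc (0:ℝ) 1, ∀ a b : ℝ, p s a b ≤ C * Gk C s a b := by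
    intro s hs a b
    simpa [Gk, mul_assoc] using hpb s hs a b
  have hpoint : ∀ w, f w ≤ C^(k+2) *
      (Gk C (t 0) x (w 0) *
        (∏ i : Fin k, Gk C (t i.succ.castSucc) (w i.castSucc + e i.castSucc) (w i.succ)) *
        Gk C (t (Fin.last (k+1))) (w (Fin.last k) + e (Fin.last k)) y) := by
    intro w
    have b0 : p (τ 0) x (w 0) ≤ C * Gk C (t 0) x (w 0) := by
      rw [ht0]; exact hGb _ m0 _ _
    have bmid : ∀ i : Fin k,
        p (τ i.succ - τ i.castSucc) (w i.castSucc + e i.castSucc) (w i.succ)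
          ≤ C * Gk C (t i.succ.castSucc) (w i.castSucc + e i.castSucc) (w i.succ) := by
      intro i; rw [htmid i]; exact hGb _ (mmid i) _ _
    have blast : p (h - τ (Fin.last k)) (w (Fin.last k) + e (Fin.last k)) y
        ≤ C * Gk C (t (Fin.last (k+1))) (w (Fin.last k) + e (Fin.last k)) y := by
      rw [htlast]; exact hGb _ mlast _ _
    have h1 : f w ≤ (C * Gk C (t 0) x (w 0)) *
        (∏ i : Fin k, C * Gk C (t i.succ.castSucc) (w i.castSucc + e i.castSucc) (w i.succ)) *
        (C * Gk C (t (Fin.last (k+1))) (w (Fin.last k) + e (Fin.last k)) y) := by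
      refine mul_le_mul (mul_le_mul b0 (Finset.prod_le_prod
          (fun i _ => hpn _ (mmid i) _ _) (fun i _ => bmid i)) ?_ ?_) blast ?_ ?_
      · exact Finset.prod_nonneg fun i _ => hpn _ (mmid i) _ _
      · exact mul_nonneg hCpos.le (Gk_nonneg _ _ _ _)
      · exact hpn _ mlast _ _
      · exact mul_nonneg (mul_nonneg hCpos.le (Gk_nonneg _ _ _ _))
          (Finset.prod_nonneg fun i _ =>
            mul_nonneg hCpos.le (Gk_nonneg _ _ _ _))
    refine h1.trans (le_of_eq ?_)
    rw [Finset.prod_mul_distrib, Finset.prod_const, Finset.card_univ, Fintype.card_fin]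
    ring
  have hchain := Gk_chain hCpos k t htpos x y e
  set V : ENNReal := ENNReal.ofReal C ^ (k+2) *
      (ENNReal.ofReal (Real.sqrt (Real.pi * C)) ^ (k+1) *
        ENNReal.ofReal (Gk C h (x + ∑ i, e i) y)) with hV
  have hlint : (∫⁻ w, ENNReal.ofReal (f w)) ≤ V := by
    have hb : ∀ w, ENNReal.ofReal (f w) ≤ ENNReal.ofReal C ^ (k+2) *
        (ENNReal.ofReal (Gk C (t 0) x (w 0)) *
          (∏ i : Fin k, ENNReal.ofReal
            (Gk C (t i.succ.castSucc) (w i.castSucc + e i.castSucc) (w i.succ))) *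
          ENNReal.ofReal (Gk C (t (Fin.last (k+1))) (w (Fin.last k) + e (Fin.last k)) y)) := by
      intro w
      refine le_trans (ENNReal.ofReal_le_ofReal (hpoint w)) (le_of_eq ?_)
      rw [ENNReal.ofReal_mul (by positivity), ENNReal.ofReal_pow hCpos.le,
        ENNReal.ofReal_mul (mul_nonneg (Gk_nonneg _ _ _ _)
          (Finset.prod_nonneg fun i _ => Gk_nonneg _ _ _ _)),
        ENNReal.ofReal_mul (Gk_nonneg _ _ _ _),
        ENNReal.ofReal_prod_of_nonneg (fun i _ => Gk_nonneg _ _ _ _)]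
    calc (∫⁻ w, ENNReal.ofReal (f w))
        ≤ ∫⁻ w : Fin (k+1) → ℝ, ENNReal.ofReal C ^ (k+2) *
            (ENNReal.ofReal (Gk C (t 0) x (w 0)) *
              (∏ i : Fin k, ENNReal.ofReal
                (Gk C (t i.succ.castSucc) (w i.castSucc + e i.castSucc) (w i.succ))) *
              ENNReal.ofReal (Gk C (t (Fin.last (k+1)))
                (w (Fin.last k) + e (Fin.last k)) y)) := lintegral_mono hb
      _ = ENNReal.ofReal C ^ (k+2) *
          ∫⁻ w : Fin (k+1) → ℝ,
            ENNReal.ofReal (Gk C (t 0) x (w 0)) *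
              (∏ i : Fin k, ENNReal.ofReal
                (Gk C (t i.succ.castSucc) (w i.castSucc + e i.castSucc) (w i.succ))) *
              ENNReal.ofReal (Gk C (t (Fin.last (k+1)))
                (w (Fin.last k) + e (Fin.last k)) y) :=
          lintegral_const_mul' _ _ (ENNReal.pow_ne_top ENNReal.ofReal_ne_top)
      _ = V := by rw [hchain, htsum]
  have hVne : V ≠ ⊤ :=
    ENNReal.mul_ne_top (ENNReal.pow_ne_top ENNReal.ofReal_ne_top)
      (ENNReal.mul_ne_top (ENNReal.pow_ne_top ENNReal.ofReal_ne_top) ENNReal.ofReal_ne_top)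
  have hint : ∫ w, f w ≤ V.toReal := by
    rw [integral_eq_lintegral_of_nonneg_ae (Filter.Eventually.of_forall hf_nonneg)
      hf_meas.aestronglyMeasurable]
    exact ENNReal.toReal_mono hVne hlint
  have hVto : V.toReal = C^(k+2) *
      (Real.sqrt (Real.pi*C)^(k+1) * Gk C h (x + ∑ i, e i) y) := by
    rw [hV, ENNReal.toReal_mul, ENNReal.toReal_mul, ENNReal.toReal_pow, ENNReal.toReal_pow,
      ENNReal.toReal_ofReal hCpos.le, ENNReal.toReal_ofReal (Real.sqrt_nonneg _),
      ENNReal.toReal_ofReal (Gk_nonneg _ _ _ _)]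
  refine le_trans hint ?_
  rw [hVto]
  have hCC : C ≤ Real.pi * C^2 := by nlinarith [Real.pi_gt_three]
  have hs1 : Real.sqrt (Real.pi * C) ≤ Real.pi * C :=
    (Real.sqrt_le_left (by positivity)).2 (by nlinarith)
  have hcoef : C^(k+2) * Real.sqrt (Real.pi*C)^(k+1) ≤ (Real.pi * C^2)^((k+1)+1) := by
    calc C^(k+2) * Real.sqrt (Real.pi*C)^(k+1)
        ≤ C^(k+2) * (Real.pi*C)^(k+1) :=
          mul_le_mul_of_nonneg_left (pow_le_pow_left₀ (Real.sqrt_nonneg _) hs1 _) (by positivity)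
      _ = (Real.pi * C^2)^(k+1) * C := by ring
      _ ≤ (Real.pi * C^2)^(k+1) * (Real.pi * C^2) :=
          mul_le_mul_of_nonneg_left hCC (by positivity)
      _ = (Real.pi * C^2)^((k+1)+1) := by ring
  have hexp : Real.exp (-(y - (x + ∑ i, e i))^2 / (C * h))
      ≤ Real.exp (-((∑ i, e i) - (y - x))^2 / (Real.pi * C^2 * h)) := by
    rw [Real.exp_le_exp, show ((∑ i, e i) - (y - x))^2 = (y - (x + ∑ i, e i))^2 by ring,
      neg_div, neg_div, neg_le_neg_iff]
    have hd : C * h ≤ Real.pi * C^2 * h := by nlinarith [Real.pi_gt_three, hh.1]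
    have hch : (0:ℝ) < C * h := by have := hh.1; positivity
    gcongr
  unfold Gk
  calc C^(k+2) * (Real.sqrt (Real.pi*C)^(k+1) *
        ((Real.sqrt h)⁻¹ * Real.exp (-(y - (x + ∑ i, e i))^2 / (C*h))))
      = (C^(k+2) * Real.sqrt (Real.pi*C)^(k+1)) *
        ((Real.sqrt h)⁻¹ * Real.exp (-(y - (x + ∑ i, e i))^2 / (C*h))) := by ring
    _ ≤ (Real.pi*C^2)^((k+1)+1) *
        ((Real.sqrt h)⁻¹ * Real.exp (-((∑ i, e i) - (y-x))^2 / (Real.pi*C^2*h))) :=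
        mul_le_mul hcoef (mul_le_mul_of_nonneg_left hexp (inv_nonneg.2 (Real.sqrt_nonneg _)))
          (by positivity) (by positivity)
    _ = (Real.pi*C^2)^((k+1)+1) * (Real.sqrt h)⁻¹ *
        Real.exp (-((∑ i, e i) - (y-x))^2 / (Real.pi*C^2*h)) := by ring
end

section
/- Let u > 0, C ≥ 1 and Λ > 0. Let (p_t)_{t∈(0,1]} be a family of measurable functions p_t : ℝ × ℝ → [0,∞) satisfying the Aronson-type upper bound p_t(x,y) ≤ C·t^{-1/2}·exp(-(y-x)²/(C·t)) for all t ∈ (0,1] and x, y ∈ ℝ, and let F : ℝ → [0,∞) be measurable with F(z) ≤ C·exp(-u·|z|) for all z ∈ ℝ. For h ∈ (0,1], k ≥ 1 and x, y ∈ ℝ let q_h^{(k)}(x,y) be the k-fold jump-time decomposition integral defined from p and F, and for λ ∈ (0,Λ] define q̄_h^{(2)}(x,y;λ) = exp(-λ·h)·Σ_{k=2}^∞ λ^k · q_h^{(k)}(x,y). Then there exist constants C' > 0, ζ ∈ (0,1) and h_0 ∈ (0,1] such that for all h ∈ (0, h_0] and all x, y ∈ ℝ: sup_{λ∈(0,Λ]}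 q̄_h^{(2)}(x,y;λ) ≤ C'·h²·exp(-u·ζ·|y - x|). -/
open MeasureTheory ENNReal Real

/-- The `(k+1)`-fold jump-time decomposition integral `q_h^{(k+1)}(x,y)` of the
transition kernel of a jump diffusion conditioned on exactly `k+1` jumps in `(0,h]`. -/
noncomputable def jumpDecompositionKernel (p : ℝ → ℝ → ℝ → ℝ) (F : ℝ → ℝ)
    (h : ℝ) (k : ℕ) (x y : ℝ) : ℝ :=
  ∫ τ in {τ : Fin (k + 1) → ℝ | StrictMono τ ∧ 0 < τ 0 ∧ τ (Fin.last k) < h},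
    ∫ e : Fin (k + 1) → ℝ, ∫ w : Fin (k + 1) → ℝ,
      p (τ 0) x (w 0) * (∏ i, F (e i)) *
        (∏ i : Fin k,
          p (τ i.succ - τ i.castSucc) (w i.castSucc + e i.castSucc) (w i.succ)) *
        p (h - τ (Fin.last k)) (w (Fin.last k) + e (Fin.last k)) y

lemma measurable_finCons {n : ℕ} :
    Measurable fun a : ℝ × (Fin n → ℝ) => (Fin.cons a.1 a.2 : Fin (n+1) → ℝ) := by
  apply measurable_pi_iff.2; intro i
  refine Fin.cases ?_ ?_ i
  · simpa using measurable_fst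
  · intro j; simpa [Function.comp_def] using (measurable_pi_apply j).comp measurable_snd

lemma lintegral_pi_peel {n : ℕ} (F : (Fin (n+1) → ℝ) → ℝ≥0∞) (hF : Measurable F) :
    ∫⁻ w : Fin (n+1) → ℝ, F w = ∫⁻ r : Fin n → ℝ, ∫⁻ x : ℝ, F (Fin.cons x r) := by
  have hmp := measurePreserving_piFinSuccAbove (fun _ : Fin (n+1) => (volume : Measure ℝ)) 0
  have he : MeasurableEmbedding (MeasurableEquiv.piFinSuccAbove (fun _ : Fin (n+1) => ℝ) 0).symm :=
    (MeasurableEquiv.piFinSuccAbove (fun _ : Fin (n+1) => ℝ) 0).symm.measurableEmbedding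
  rw [volume_pi, ← (MeasurePreserving.symm _ hmp).lintegral_comp_emb he F]
  have : ∀ z : ℝ × (Fin n → ℝ),
      F ((MeasurableEquiv.piFinSuccAbove (fun _ : Fin (n+1) => ℝ) 0).symm z)
        = F (Fin.cons z.1 z.2) := by
    intro z
    congr 1
    simp [MeasurableEquiv.piFinSuccAbove, Fin.insertNthEquiv, Fin.insertNth_zero']
  simp_rw [this]
  rw [lintegral_prod_symm (fun a : ℝ × (Fin n → ℝ) => F (Fin.cons a.1 a.2))
    ((hF.comp measurable_finCons).aemeasurable)]
  rfl

noncomputable def gk (C t a : ℝ) : ℝ := (Real.sqrt t)⁻¹ * Real.exp (-a^2 / (C*t))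

lemma gk_nonneg {C t a : ℝ} : 0 ≤ gk C t a :=
  mul_nonneg (inv_nonneg.2 (Real.sqrt_nonneg _)) (Real.exp_pos _).le

lemma measurable_gk {C t : ℝ} : Measurable (gk C t) := by
  unfold gk; fun_prop

lemma gauss_lintegral_s7 {A : ℝ} (hA : 0 < A) (m : ℝ) :
    ∫⁻ x : ℝ, ENNReal.ofReal (Real.exp (-(A * (x - m)^2))) = ENNReal.ofReal (Real.sqrt (π / A)) := by
  have hint : Integrable (fun x : ℝ => Real.exp (-(A * (x - m)^2))) := by
    have := (integrable_exp_neg_mul_sq hA).comp_sub_right m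
    simpa [neg_mul] using this
  rw [← ofReal_integral_eq_lintegral_ofReal hint (Filter.Eventually.of_forall fun x => (exp_pos _).le)]
  congr 1
  have := integral_sub_right_eq_self (μ := volume) (fun x : ℝ => Real.exp (-(A * x^2))) m
  rw [this]
  simpa [neg_mul] using integral_gaussian A

lemma gk_conv {C s t : ℝ} (hC : 0 < C) (hs : 0 < s) (ht : 0 < t) (a b : ℝ) :
    ∫⁻ w : ℝ, ENNReal.ofReal (gk C s (w - a) * gk C t (b - w))
      = ENNReal.ofReal (Real.sqrt (π*C) * gk C (s+t) (b - a)) := by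
  have hst : 0 < s + t := by linarith
  set m₀ := a + s*(b-a)/(s+t) with hm₀
  set A := (s+t)/(C*s*t) with hA
  have hApos : 0 < A := by positivity
  have key : ∀ w : ℝ, gk C s (w-a) * gk C t (b-w)
      = ((Real.sqrt s)⁻¹ * (Real.sqrt t)⁻¹ * Real.exp (-(b-a)^2/(C*(s+t))))
        * Real.exp (-(A * (w - m₀)^2)) := by
    intro w
    unfold gk
    rw [mul_mul_mul_comm, ← Real.exp_add, mul_assoc (√s)⁻¹, mul_assoc, ← Real.exp_add,
      ← mul_assoc]
    congr 1
    rw [hm₀, hA]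
    congr 1
    field_simp
    ring
  simp_rw [key]
  have hc0 : 0 ≤ (Real.sqrt s)⁻¹ * (Real.sqrt t)⁻¹ * Real.exp (-(b-a)^2/(C*(s+t))) := by positivity
  simp_rw [ENNReal.ofReal_mul hc0]
  rw [lintegral_const_mul' _ _ ENNReal.ofReal_ne_top, gauss_lintegral_s7 hApos, ← ENNReal.ofReal_mul hc0]
  congr 1
  have h1 : π / A = (π*C) * (s*t) / (s+t) := by rw [hA]; field_simp
  have h2 : Real.sqrt (π / A) = Real.sqrt (π*C) * (Real.sqrt s * Real.sqrt t) / Real.sqrt (s+t) := by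
    rw [h1, Real.sqrt_div (by positivity), Real.sqrt_mul (by positivity), Real.sqrt_mul hs.le]
  rw [h2]
  unfold gk
  have h3 : Real.sqrt s ≠ 0 := by positivity
  have h4 : Real.sqrt t ≠ 0 := by positivity
  have h5 : Real.sqrt (s+t) ≠ 0 := by positivity
  field_simp

lemma chain_meas {C : ℝ} (k : ℕ) (s t : ℝ) (Δ c : Fin k → ℝ) (d x y : ℝ) :
    Measurable fun w : Fin (k+1) → ℝ =>
      gk C s (w 0 - x) * (∏ i : Fin k, gk C (Δ i) (w i.succ - (w i.castSucc + c i)))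
        * gk C t (y - (w (Fin.last k) + d)) := by
  refine Measurable.mul (Measurable.mul ?_ ?_) ?_
  · exact measurable_gk.comp ((measurable_pi_apply 0).sub measurable_const)
  · exact Finset.measurable_prod _ fun i _ => measurable_gk.comp
      ((measurable_pi_apply _).sub ((measurable_pi_apply _).add measurable_const))
  · exact measurable_gk.comp (measurable_const.sub ((measurable_pi_apply _).add measurable_const))

lemma chain_lintegral {C : ℝ} (hC : 0 < C) :
    ∀ (k : ℕ) (s t : ℝ) (Δ c : Fin k → ℝ) (d x y : ℝ), 0 < s → 0 < t → (∀ i, 0 < Δ i) →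
    ∫⁻ w : Fin (k+1) → ℝ, ENNReal.ofReal
        (gk C s (w 0 - x) * (∏ i : Fin k, gk C (Δ i) (w i.succ - (w i.castSucc + c i)))
          * gk C t (y - (w (Fin.last k) + d)))
      = ENNReal.ofReal (Real.sqrt (π*C) ^ (k+1)
          * gk C (s + (∑ i, Δ i) + t) (y - x - ((∑ i, c i) + d))) := by
  intro k
  induction k with
  | zero =>
    intro s t Δ c d x y hs ht hΔ
    rw [lintegral_pi_peel _ (chain_meas 0 s t Δ c d x y).ennreal_ofReal]
    have inner_eq : ∀ r : Fin 0 → ℝ, (∫⁻ x₀ : ℝ, ENNReal.ofReal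
        (gk C s ((Fin.cons x₀ r : Fin 1 → ℝ) 0 - x)
          * (∏ i : Fin 0, gk C (Δ i) ((Fin.cons x₀ r : Fin 1 → ℝ) i.succ
              - ((Fin.cons x₀ r : Fin 1 → ℝ) i.castSucc + c i)))
          * gk C t (y - ((Fin.cons x₀ r : Fin 1 → ℝ) (Fin.last 0) + d))))
        = ENNReal.ofReal (Real.sqrt (π*C) * gk C (s + t) ((y - d) - x)) := by
      intro r
      have : ∀ x₀ : ℝ,
          gk C s ((Fin.cons x₀ r : Fin 1 → ℝ) 0 - x)
            * (∏ i : Fin 0, gk C (Δ i) ((Fin.cons x₀ r : Fin 1 → ℝ) i.succ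
                - ((Fin.cons x₀ r : Fin 1 → ℝ) i.castSucc + c i)))
            * gk C t (y - ((Fin.cons x₀ r : Fin 1 → ℝ) (Fin.last 0) + d))
          = gk C s (x₀ - x) * gk C t ((y - d) - x₀) := by
        intro x₀
        have h1 : (Fin.last 0 : Fin 1) = 0 := rfl
        rw [h1]
        simp only [Fin.cons_zero, Finset.univ_eq_empty, Finset.prod_empty, mul_one]
        rw [show y - (x₀ + d) = (y - d) - x₀ from by ring]
      simp_rw [this]
      exact gk_conv hC hs ht x (y - d)
    simp_rw [inner_eq]
    rw [lintegral_const]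
    simp only [Finset.univ_eq_empty, Finset.sum_empty]
    rw [show (volume : Measure (Fin 0 → ℝ)) Set.univ = 1 from by
      simp [volume_pi, Measure.pi_univ]]
    rw [mul_one]
    ring_nf
  | succ k ih =>
    intro s t Δ c d x y hs ht hΔ
    rw [lintegral_pi_peel _ (chain_meas (k+1) s t Δ c d x y).ennreal_ofReal]
    have inner_eq : ∀ r : Fin (k+1) → ℝ, (∫⁻ x₀ : ℝ, ENNReal.ofReal
        (gk C s ((Fin.cons x₀ r : Fin (k+2) → ℝ) 0 - x)
          * (∏ i : Fin (k+1), gk C (Δ i) ((Fin.cons x₀ r : Fin (k+2) → ℝ) i.succ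
              - ((Fin.cons x₀ r : Fin (k+2) → ℝ) i.castSucc + c i)))
          * gk C t (y - ((Fin.cons x₀ r : Fin (k+2) → ℝ) (Fin.last (k+1)) + d))))
        = ENNReal.ofReal (Real.sqrt (π*C) *
            (gk C (s + Δ 0) (r 0 - (x + c 0))
              * (∏ i : Fin k, gk C (Δ i.succ) (r i.succ - (r i.castSucc + c i.succ)))
              * gk C t (y - (r (Fin.last k) + d)))) := by
      intro r
      have hrw : ∀ x₀ : ℝ,
          gk C s ((Fin.cons x₀ r : Fin (k+2) → ℝ) 0 - x)
            * (∏ i : Fin (k+1), gk C (Δ i) ((Fin.cons x₀ r : Fin (k+2) → ℝ) i.succ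
                - ((Fin.cons x₀ r : Fin (k+2) → ℝ) i.castSucc + c i)))
            * gk C t (y - ((Fin.cons x₀ r : Fin (k+2) → ℝ) (Fin.last (k+1)) + d))
          = ((∏ i : Fin k, gk C (Δ i.succ) (r i.succ - (r i.castSucc + c i.succ)))
              * gk C t (y - (r (Fin.last k) + d)))
            * (gk C s (x₀ - x) * gk C (Δ 0) ((r 0 - c 0) - x₀)) := by
        intro x₀
        rw [Fin.prod_univ_succ]
        rw [← Fin.succ_last, Fin.cons_succ, Fin.cons_zero, Fin.castSucc_zero, Fin.cons_zero,
          Fin.cons_succ]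
        have hterm : ∀ i : Fin k,
            gk C (Δ i.succ) ((Fin.cons x₀ r : Fin (k+2) → ℝ) i.succ.succ
              - ((Fin.cons x₀ r : Fin (k+2) → ℝ) i.succ.castSucc + c i.succ))
            = gk C (Δ i.succ) (r i.succ - (r i.castSucc + c i.succ)) := by
          intro i
          rw [Fin.cons_succ, ← Fin.succ_castSucc, Fin.cons_succ]
        simp_rw [hterm]
        rw [show r 0 - (x₀ + c 0) = (r 0 - c 0) - x₀ from by ring]
        ring
      simp_rw [hrw]
      have hrest0 : 0 ≤ (∏ i : Fin k, gk C (Δ i.succ) (r i.succ - (r i.castSucc + c i.succ)))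
          * gk C t (y - (r (Fin.last k) + d)) :=
        mul_nonneg (Finset.prod_nonneg fun _ _ => gk_nonneg) gk_nonneg
      simp_rw [ENNReal.ofReal_mul hrest0]
      rw [lintegral_const_mul' _ _ ENNReal.ofReal_ne_top,
        gk_conv hC hs (hΔ 0) x (r 0 - c 0), ← ENNReal.ofReal_mul hrest0]
      congr 1
      rw [show r 0 - c 0 - x = r 0 - (x + c 0) from by ring]
      ring
    simp_rw [inner_eq]
    have hK0 : (0:ℝ) ≤ Real.sqrt (π*C) := Real.sqrt_nonneg _
    simp_rw [ENNReal.ofReal_mul hK0]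
    rw [lintegral_const_mul' _ _ ENNReal.ofReal_ne_top,
      ih (s + Δ 0) t (fun i => Δ i.succ) (fun i => c i.succ) d (x + c 0) y
        (by have := hΔ 0; linarith) ht (fun i => hΔ i.succ),
      ← ENNReal.ofReal_mul hK0]
    congr 1
    rw [Fin.sum_univ_succ (f := Δ), Fin.sum_univ_succ (f := c)]
    rw [show s + Δ 0 + (∑ i : Fin k, Δ i.succ) + t = s + (Δ 0 + ∑ i : Fin k, Δ i.succ) + t
      from by ring]
    rw [show y - (x + c 0) - ((∑ i : Fin k, c i.succ) + d)
        = y - x - ((c 0 + ∑ i : Fin k, c i.succ) + d) from by ring]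
    ring

lemma integrable_exp_neg_abs {a : ℝ} (ha : 0 < a) :
    Integrable (fun x : ℝ => Real.exp (-(a * |x|))) := by
  have hf : IntegrableOn (fun x : ℝ => Real.exp (-(a * |x|))) (Set.Ioi 0) := by
    refine (exp_neg_integrableOn_Ioi 0 ha).congr_fun (fun x hx => ?_) measurableSet_Ioi
    rw [abs_of_pos hx]; simp only [neg_mul]
  have int_Iic : IntegrableOn (fun x : ℝ => Real.exp (-(a * |x|))) (Set.Iic 0) := by
    rw [← Measure.map_neg_eq_self (volume : Measure ℝ)]
    have m : MeasurableEmbedding fun x : ℝ => -x := (Homeomorph.neg ℝ).measurableEmbedding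
    rw [m.integrableOn_map_iff]
    simp_rw [Function.comp_def, abs_neg, Set.neg_preimage, Set.neg_Iic, neg_zero]
    exact Iff.mpr integrableOn_Ici_iff_integrableOn_Ioi hf
  rw [← integrableOn_univ, ← Set.Iic_union_Ioi (a := (0:ℝ))]
  exact int_Iic.union hf

/-- master comparison lemma -/
lemma integral_le_of_lintegral_le {α : Type*} [MeasurableSpace α] {μ : Measure α}
    {f g : α → ℝ} {v : ℝ} (hv : 0 ≤ v) (hf0 : ∀ᵐ a ∂μ, 0 ≤ f a)
    (hfg : ∀ᵐ a ∂μ, f a ≤ g a) (hg : AEStronglyMeasurable g μ)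
    (hg0 : ∀ᵐ a ∂μ, 0 ≤ g a)
    (hgl : ∫⁻ a, ENNReal.ofReal (g a) ∂μ ≤ ENNReal.ofReal v) :
    ∫ a, f a ∂μ ≤ v := by
  have hgint : Integrable g μ := by
    refine ⟨hg, ?_⟩
    rw [hasFiniteIntegral_iff_norm]
    calc ∫⁻ a, ENNReal.ofReal ‖g a‖ ∂μ = ∫⁻ a, ENNReal.ofReal (g a) ∂μ := by
          apply lintegral_congr_ae
          filter_upwards [hg0] with a h0
          rw [Real.norm_of_nonneg h0]
      _ ≤ ENNReal.ofReal v := hgl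
      _ < ⊤ := ofReal_lt_top
  have hgv : ∫ a, g a ∂μ ≤ v := by
    rw [integral_eq_lintegral_of_nonneg_ae hg0 hg]
    calc (∫⁻ a, ENNReal.ofReal (g a) ∂μ).toReal ≤ (ENNReal.ofReal v).toReal :=
          ENNReal.toReal_mono ofReal_ne_top hgl
      _ = v := ENNReal.toReal_ofReal hv
  by_cases hfi : Integrable f μ
  · exact le_trans (integral_mono_ae hfi hgint hfg) hgv
  · rw [integral_undef hfi]; exact hv

lemma lintegral_pi_prod (φ : ℝ → ℝ) (hm : Measurable φ) (h0 : ∀ x, 0 ≤ φ x) :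
    ∀ n : ℕ, ∫⁻ e : Fin n → ℝ, ENNReal.ofReal (∏ i, φ (e i))
      = (∫⁻ x : ℝ, ENNReal.ofReal (φ x))^n := by
  intro n
  induction n with
  | zero =>
    rw [show (fun e : Fin 0 → ℝ => ENNReal.ofReal (∏ i, φ (e i))) = fun _ => 1 from by
      funext e; simp]
    rw [lintegral_const, one_mul, pow_zero,
      show (volume : Measure (Fin 0 → ℝ)) Set.univ = 1 from by simp [volume_pi, Measure.pi_univ]]
  | succ n ih =>
    have hme : Measurable fun e : Fin (n+1) → ℝ => ENNReal.ofReal (∏ i, φ (e i)) :=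
      (Finset.measurable_prod _ fun i _ => hm.comp (measurable_pi_apply i)).ennreal_ofReal
    rw [lintegral_pi_peel _ hme]
    have : ∀ (r : Fin n → ℝ), (∫⁻ x₀ : ℝ, ENNReal.ofReal (∏ i : Fin (n+1), φ ((Fin.cons x₀ r : Fin (n+1) → ℝ) i)))
        = (∫⁻ x : ℝ, ENNReal.ofReal (φ x)) * ENNReal.ofReal (∏ i : Fin n, φ (r i)) := by
      intro r
      have : ∀ x₀ : ℝ, (∏ i : Fin (n+1), φ ((Fin.cons x₀ r : Fin (n+1) → ℝ) i))
          = φ x₀ * ∏ i : Fin n, φ (r i) := by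
        intro x₀
        rw [Fin.prod_univ_succ, Fin.cons_zero]
        simp_rw [Fin.cons_succ]
      simp_rw [this, ENNReal.ofReal_mul (h0 _)]
      rw [lintegral_mul_const' _ _ ENNReal.ofReal_ne_top]
    simp_rw [this]
    rw [lintegral_const_mul (f := fun r : Fin n → ℝ => ENNReal.ofReal (∏ i, φ (r i))) _
      (by exact (Finset.measurable_prod _ fun i _ =>
        hm.comp (measurable_pi_apply i)).ennreal_ofReal), ih]
    ring

lemma gk_lintegral {D h : ℝ} (hD : 0 < D) (hh : 0 < h) (b : ℝ) :
    ∫⁻ x : ℝ, ENNReal.ofReal (gk D h (b - x)) = ENNReal.ofReal (Real.sqrt h * Real.sqrt (π*D) / Real.sqrt h) := by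
  unfold gk
  simp_rw [ENNReal.ofReal_mul (inv_nonneg.2 (Real.sqrt_nonneg h))]
  rw [lintegral_const_mul' _ _ ENNReal.ofReal_ne_top]
  have harg : ∀ x : ℝ, -(b-x)^2/(D*h) = -((D*h)⁻¹ * (x - b)^2) := by intro x; ring
  simp_rw [harg]
  rw [gauss_lintegral_s7 (by positivity) b, ← ENNReal.ofReal_mul (inv_nonneg.2 (Real.sqrt_nonneg h))]
  congr 1
  rw [show π / (D*h)⁻¹ = (π*D)*h from by field_simp, Real.sqrt_mul (by positivity)]
  ring

lemma gk_lintegral' {D h : ℝ} (hD : 0 < D) (hh : 0 < h) (b : ℝ) :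
    ∫⁻ x : ℝ, ENNReal.ofReal (gk D h (b - x)) = ENNReal.ofReal (Real.sqrt (π*D)) := by
  rw [gk_lintegral hD hh b]
  congr 1
  have hsh : Real.sqrt h ≠ 0 := by positivity
  field_simp

lemma elayer {C a h : ℝ} (hC : 0 < C) (ha : 0 < a) (hh : 0 < h) (n : ℕ) (s : ℝ) :
    ∫⁻ e : Fin (n+1) → ℝ, ENNReal.ofReal
        ((∏ i, Real.exp (-(a * |e i|))) * gk (2*C) h (s - ∑ i, e i))
      ≤ ENNReal.ofReal (Real.sqrt (π*(2*C)))
          * (∫⁻ x : ℝ, ENNReal.ofReal (Real.exp (-(a * |x|))))^n := by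
  have hmF : Measurable fun e : Fin (n+1) → ℝ => ENNReal.ofReal
      ((∏ i, Real.exp (-(a * |e i|))) * gk (2*C) h (s - ∑ i, e i)) := by
    apply Measurable.ennreal_ofReal
    exact ((Finset.measurable_prod _ fun i _ => by fun_prop).mul
      (measurable_gk.comp (measurable_const.sub (Finset.measurable_sum _ fun i _ =>
        measurable_pi_apply i))))
  rw [lintegral_pi_peel _ hmF]
  have hstep : ∀ r : Fin n → ℝ,
      (∫⁻ x₀ : ℝ, ENNReal.ofReal
        ((∏ i : Fin (n+1), Real.exp (-(a * |(Fin.cons x₀ r : Fin (n+1) → ℝ) i|)))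
          * gk (2*C) h (s - ∑ i : Fin (n+1), (Fin.cons x₀ r : Fin (n+1) → ℝ) i)))
      ≤ ENNReal.ofReal (∏ i : Fin n, Real.exp (-(a * |r i|)))
          * ENNReal.ofReal (Real.sqrt (π*(2*C))) := by
    intro r
    have hle : ∀ x₀ : ℝ,
        ENNReal.ofReal ((∏ i : Fin (n+1), Real.exp (-(a * |(Fin.cons x₀ r : Fin (n+1) → ℝ) i|)))
          * gk (2*C) h (s - ∑ i : Fin (n+1), (Fin.cons x₀ r : Fin (n+1) → ℝ) i))
        ≤ ENNReal.ofReal (∏ i : Fin n, Real.exp (-(a * |r i|)))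
            * ENNReal.ofReal (gk (2*C) h ((s - ∑ i : Fin n, r i) - x₀)) := by
      intro x₀
      rw [← ENNReal.ofReal_mul (Finset.prod_nonneg fun _ _ => (Real.exp_pos _).le)]
      apply ENNReal.ofReal_le_ofReal
      rw [Fin.prod_univ_succ, Fin.cons_zero, Fin.sum_univ_succ, Fin.cons_zero]
      simp_rw [Fin.cons_succ]
      rw [show s - (x₀ + ∑ i : Fin n, r i) = (s - ∑ i : Fin n, r i) - x₀ from by ring]
      calc Real.exp (-(a * |x₀|)) * (∏ i : Fin n, Real.exp (-(a * |r i|)))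
            * gk (2*C) h ((s - ∑ i : Fin n, r i) - x₀)
          ≤ 1 * (∏ i : Fin n, Real.exp (-(a * |r i|)))
            * gk (2*C) h ((s - ∑ i : Fin n, r i) - x₀) := by
            refine mul_le_mul_of_nonneg_right (mul_le_mul_of_nonneg_right
              (Real.exp_le_one_iff.2 (neg_nonpos.2 (mul_nonneg ha.le (abs_nonneg _))))
              (Finset.prod_nonneg fun _ _ => (Real.exp_pos _).le)) gk_nonneg
        _ = (∏ i : Fin n, Real.exp (-(a * |r i|)))
            * gk (2*C) h ((s - ∑ i : Fin n, r i) - x₀) := by ring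
    calc (∫⁻ x₀ : ℝ, ENNReal.ofReal
        ((∏ i : Fin (n+1), Real.exp (-(a * |(Fin.cons x₀ r : Fin (n+1) → ℝ) i|)))
          * gk (2*C) h (s - ∑ i : Fin (n+1), (Fin.cons x₀ r : Fin (n+1) → ℝ) i)))
        ≤ ∫⁻ x₀ : ℝ, ENNReal.ofReal (∏ i : Fin n, Real.exp (-(a * |r i|)))
            * ENNReal.ofReal (gk (2*C) h ((s - ∑ i : Fin n, r i) - x₀)) :=
          lintegral_mono hle
      _ = ENNReal.ofReal (∏ i : Fin n, Real.exp (-(a * |r i|)))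
          * ENNReal.ofReal (Real.sqrt (π*(2*C))) := by
          rw [lintegral_const_mul' _ _ ENNReal.ofReal_ne_top,
            gk_lintegral' (by positivity) hh]
  calc (∫⁻ r : Fin n → ℝ, ∫⁻ x₀ : ℝ, ENNReal.ofReal
        ((∏ i : Fin (n+1), Real.exp (-(a * |(Fin.cons x₀ r : Fin (n+1) → ℝ) i|)))
          * gk (2*C) h (s - ∑ i : Fin (n+1), (Fin.cons x₀ r : Fin (n+1) → ℝ) i)))
      ≤ ∫⁻ r : Fin n → ℝ, ENNReal.ofReal (∏ i : Fin n, Real.exp (-(a * |r i|)))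
          * ENNReal.ofReal (Real.sqrt (π*(2*C))) := lintegral_mono hstep
    _ = ENNReal.ofReal (Real.sqrt (π*(2*C)))
          * (∫⁻ x : ℝ, ENNReal.ofReal (Real.exp (-(a * |x|))))^n := by
        rw [lintegral_mul_const' _ _ ENNReal.ofReal_ne_top,
          lintegral_pi_prod (fun x => Real.exp (-(a * |x|))) (by fun_prop)
            (fun x => (Real.exp_pos _).le) n]
        ring

lemma fin_telescope : ∀ {k : ℕ} (τ : Fin (k+1) → ℝ),
    ∑ i : Fin k, (τ i.succ - τ i.castSucc) = τ (Fin.last k) - τ 0 := by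
  intro k
  induction k with
  | zero => intro τ; simp
  | succ k ih =>
    intro τ
    rw [Fin.sum_univ_castSucc]
    have h1 : (∑ i : Fin k, (τ i.castSucc.succ - τ i.castSucc.castSucc))
        = τ ((Fin.last k).castSucc) - τ 0 := by
      have h2 := ih (fun j : Fin (k+1) => τ j.castSucc)
      simp only [Fin.succ_castSucc] at h2 ⊢
      rw [h2, Fin.castSucc_zero]
    rw [h1, Fin.succ_last]
    ring

/-- (P1) splitting the Gaussian into exponential decay and half Gaussian -/
lemma gk_split {C u h : ℝ} (hC : 1 ≤ C) (hu : 0 < u) (hh0 : 0 < h) (hh1 : h ≤ 1) (a : ℝ) :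
    gk C h a ≤ Real.exp (u^2*C/8) * Real.exp (-(u/2 * |a|)) * gk (2*C) h a := by
  unfold gk
  rw [show Real.exp (u^2*C/8) * Real.exp (-(u/2 * |a|)) * ((Real.sqrt h)⁻¹ * Real.exp (-a^2/(2*C*h)))
      = (Real.sqrt h)⁻¹ * (Real.exp (u^2*C/8) * Real.exp (-(u/2 * |a|)) * Real.exp (-a^2/(2*C*h)))
    from by ring]
  apply mul_le_mul_of_nonneg_left _ (inv_nonneg.2 (Real.sqrt_nonneg _))
  rw [← Real.exp_add, ← Real.exp_add]
  apply Real.exp_le_exp.2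
  have hC0 : (0:ℝ) < C := lt_of_lt_of_le one_pos hC
  have h1 : a^2/(2*C) ≤ a^2/(2*C*h) :=
    div_le_div_of_nonneg_left (sq_nonneg a) (by positivity) (by nlinarith)
  have e1 : (|a| - u*C/2)^2/(2*C) = a^2/(2*C) - u/2*|a| + u^2*C/8 := by
    rw [show (|a| - u*C/2)^2 = |a|^2 - u*C*|a| + u^2*C^2/4 from by ring, sq_abs]
    field_simp
    ring
  have e2 : 0 ≤ (|a| - u*C/2)^2/(2*C) := div_nonneg (sq_nonneg _) (by positivity)
  have e3 : -a^2/(C*h) = -(a^2/(2*C*h)) - a^2/(2*C*h) := by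
    field_simp
    ring
  rw [e3]
  have e4 : -(a^2/(2*C*h)) ≤ -(a^2/(2*C)) := neg_le_neg h1
  have e5 : -a^2/(2*C*h) = -(a^2/(2*C*h)) := neg_div _ _
  linarith

lemma exp_triangle {u : ℝ} (hu : 0 < u) {n : ℕ} (e : Fin n → ℝ) (Y : ℝ) :
    Real.exp (-(u/2 * |Y - ∑ i, e i|)) * ∏ i, Real.exp (-(u * |e i|))
      ≤ Real.exp (-(u/2 * |Y|)) * ∏ i, Real.exp (-(u/2 * |e i|)) := by
  rw [← Real.exp_sum, ← Real.exp_sum, ← Real.exp_add, ← Real.exp_add]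
  apply Real.exp_le_exp.2
  have hs1 : ∑ i, -(u * |e i|) = -(u * ∑ i, |e i|) := by
    rw [Finset.mul_sum]; simp
  have hs2 : ∑ i, -(u/2 * |e i|) = -(u/2 * ∑ i, |e i|) := by
    rw [Finset.mul_sum]; simp
  rw [hs1, hs2]
  have hE : |∑ i, e i| ≤ ∑ i, |e i| := Finset.abs_sum_le_sum_abs _ _
  have hY : |Y| - |Y - ∑ i, e i| ≤ |∑ i, e i| := by
    have := abs_sub_abs_le_abs_sub Y (Y - ∑ i, e i)
    simpa using this
  have hS0 : 0 ≤ ∑ i, |e i| := Finset.sum_nonneg fun i _ => abs_nonneg _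
  nlinarith [mul_nonneg (by linarith : (0:ℝ) ≤ u/2)
    (by linarith : 0 ≤ |Y - ∑ i, e i| + ∑ i, |e i| - |Y|)]

lemma measurable_simplex {k : ℕ} (h : ℝ) :
    MeasurableSet {τ : Fin (k+1) → ℝ | StrictMono τ ∧ 0 < τ 0 ∧ τ (Fin.last k) < h} := by
  have hmono : {τ : Fin (k+1) → ℝ | StrictMono τ}
      = ⋂ i : Fin k, {τ : Fin (k+1) → ℝ | τ i.castSucc < τ i.succ} := by
    ext τ; simp [Fin.strictMono_iff_lt_succ]
  have hA : MeasurableSet {τ : Fin (k+1) → ℝ | StrictMono τ} := by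
    rw [hmono]
    exact MeasurableSet.iInter fun i =>
      measurableSet_lt (measurable_pi_apply _) (measurable_pi_apply _)
  have hB : MeasurableSet {τ : Fin (k+1) → ℝ | 0 < τ 0} :=
    measurableSet_lt measurable_const (measurable_pi_apply _)
  have hC : MeasurableSet {τ : Fin (k+1) → ℝ | τ (Fin.last k) < h} :=
    measurableSet_lt (measurable_pi_apply _) measurable_const
  simp only [Set.setOf_and]
  exact hA.inter (hB.inter hC)

lemma simplex_vol {k : ℕ} {h : ℝ} (hh : 0 ≤ h) :
    volume {τ : Fin (k+1) → ℝ | StrictMono τ ∧ 0 < τ 0 ∧ τ (Fin.last k) < h}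
      ≤ ENNReal.ofReal h ^ (k+1) := by
  have hsub : {τ : Fin (k+1) → ℝ | StrictMono τ ∧ 0 < τ 0 ∧ τ (Fin.last k) < h}
      ⊆ Set.pi Set.univ fun _ : Fin (k+1) => Set.Ioo (0:ℝ) h := by
    rintro τ ⟨hm, h0, hl⟩ i _
    exact ⟨lt_of_lt_of_le h0 (hm.monotone (Fin.zero_le i)),
      lt_of_le_of_lt (hm.monotone (Fin.le_last i)) hl⟩
  calc volume {τ : Fin (k+1) → ℝ | StrictMono τ ∧ 0 < τ 0 ∧ τ (Fin.last k) < h}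
      ≤ volume (Set.pi Set.univ fun _ : Fin (k+1) => Set.Ioo (0:ℝ) h) := measure_mono hsub
    _ = ENNReal.ofReal h ^ (k+1) := by
        rw [volume_pi, Measure.pi_pi]
        simp [Real.volume_Ioo]

lemma q_bound (u C : ℝ) (hu : 0 < u) (hC : 1 ≤ C)
    (p : ℝ → ℝ → ℝ → ℝ)
    (hp_nonneg : ∀ t ∈ Set.Ioc (0 : ℝ) 1, ∀ x y : ℝ, 0 ≤ p t x y)
    (hp_bound : ∀ t ∈ Set.Ioc (0 : ℝ) 1, ∀ x y : ℝ,
      p t x y ≤ C * (Real.sqrt t)⁻¹ * Real.exp (-(y - x) ^ 2 / (C * t)))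
    (F : ℝ → ℝ) (hF_meas : Measurable F) (hF_nonneg : ∀ z, 0 ≤ F z)
    (hF_bound : ∀ z, F z ≤ C * Real.exp (-(u * |z|)))
    (h : ℝ) (hh0 : 0 < h) (hh1 : h ≤ 1) (k : ℕ) (x y : ℝ) :
    jumpDecompositionKernel p F h k x y
      ≤ C^(2*k+3) * Real.sqrt (π*C) ^ (k+1) * Real.exp (u^2*C/8) * Real.sqrt (π*(2*C))
          * (∫ z : ℝ, Real.exp (-(u/2 * |z|)))^k * h^(k+1)
          * Real.exp (-(u/2 * |y - x|)) := by
  have hC0 : (0:ℝ) < C := lt_of_lt_of_le one_pos hC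
  set K : ℝ := Real.sqrt (π*C) with hK
  set K2 : ℝ := Real.exp (u^2*C/8) with hK2
  set S2 : ℝ := Real.sqrt (π*(2*C)) with hS2
  set Iu : ℝ := ∫ z : ℝ, Real.exp (-(u/2 * |z|)) with hIu
  have hIu0 : 0 ≤ Iu := integral_nonneg fun z => (Real.exp_pos _).le
  have hK0 : 0 ≤ K := Real.sqrt_nonneg _
  have hK20 : 0 < K2 := Real.exp_pos _
  have hS20 : 0 ≤ S2 := Real.sqrt_nonneg _
  have hIuL : (∫⁻ z : ℝ, ENNReal.ofReal (Real.exp (-(u/2 * |z|)))) = ENNReal.ofReal Iu := by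
    rw [hIu, ofReal_integral_eq_lintegral_ofReal (integrable_exp_neg_abs (by positivity))
      (Filter.Eventually.of_forall fun z => (Real.exp_pos _).le)]
  set Y : ℝ := y - x with hY
  set Ve : ℝ := C^(2*k+3) * K^(k+1) * K2 * S2 * Iu^k * Real.exp (-(u/2 * |Y|)) with hVe
  have hVe0 : 0 ≤ Ve := by positivity
  set Sset := {τ : Fin (k + 1) → ℝ | StrictMono τ ∧ 0 < τ 0 ∧ τ (Fin.last k) < h} with hSset
  -- time facts
  have htimes : ∀ τ ∈ Sset, τ 0 ∈ Set.Ioc (0:ℝ) 1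
      ∧ (∀ i : Fin k, (τ i.succ - τ i.castSucc) ∈ Set.Ioc (0:ℝ) 1)
      ∧ (h - τ (Fin.last k)) ∈ Set.Ioc (0:ℝ) 1 := by
    rintro τ ⟨hm, h0, hl⟩
    refine ⟨⟨h0, ?_⟩, fun i => ⟨?_, ?_⟩, ⟨?_, ?_⟩⟩
    · exact le_trans (le_of_lt (lt_of_le_of_lt (hm.monotone (Fin.zero_le _)) hl)) hh1
    · exact sub_pos.2 (hm (Fin.castSucc_lt_succ (i := i)))
    · have h1 : τ i.succ ≤ τ (Fin.last k) := hm.monotone (Fin.le_last _)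
      have h2 : (0:ℝ) < τ i.castSucc := lt_of_lt_of_le h0 (hm.monotone (Fin.zero_le _))
      linarith
    · linarith
    · have : (0:ℝ) < τ (Fin.last k) := lt_of_lt_of_le h0 (hm.monotone (Fin.zero_le _))
      linarith
  -- the w-layer and e-layer bound, for τ in the simplex
  have elayer_bound : ∀ τ ∈ Sset,
      (∫ e : Fin (k+1) → ℝ, ∫ w : Fin (k+1) → ℝ,
        p (τ 0) x (w 0) * (∏ i, F (e i)) *
          (∏ i : Fin k,
            p (τ i.succ - τ i.castSucc) (w i.castSucc + e i.castSucc) (w i.succ)) *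
          p (h - τ (Fin.last k)) (w (Fin.last k) + e (Fin.last k)) y) ≤ Ve := by
    intro τ hτ
    obtain ⟨ht1, ht2, ht3⟩ := htimes τ hτ
    have hpg : ∀ t ∈ Set.Ioc (0:ℝ) 1, ∀ a b : ℝ, p t a b ≤ C * gk C t (b - a) := by
      intro t ht a b
      have := hp_bound t ht a b
      unfold gk
      rw [← mul_assoc]
      exact this
    -- the w-layer
    have wlayer : ∀ e : Fin (k+1) → ℝ,
        (∫ w : Fin (k+1) → ℝ,
          p (τ 0) x (w 0) * (∏ i, F (e i)) *
            (∏ i : Fin k,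
              p (τ i.succ - τ i.castSucc) (w i.castSucc + e i.castSucc) (w i.succ)) *
            p (h - τ (Fin.last k)) (w (Fin.last k) + e (Fin.last k)) y)
          ≤ (C^(k+2) * ∏ i, F (e i)) * (K^(k+1) * gk C h (Y - ∑ i, e i)) := by
      intro e
      have hPF : (0:ℝ) ≤ ∏ i, F (e i) := Finset.prod_nonneg fun i _ => hF_nonneg _
      apply integral_le_of_lintegral_le
        (mul_nonneg (mul_nonneg (by positivity) hPF) (mul_nonneg (by positivity) gk_nonneg))
      · apply Filter.Eventually.of_forall
        intro w
        have h1 := hp_nonneg _ ht1 x (w 0)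
        have h3 := hp_nonneg _ ht3 (w (Fin.last k) + e (Fin.last k)) y
        have hmid : 0 ≤ ∏ i : Fin k,
            p (τ i.succ - τ i.castSucc) (w i.castSucc + e i.castSucc) (w i.succ) :=
          Finset.prod_nonneg fun i _ => hp_nonneg _ (ht2 i) _ _
        positivity
      · apply Filter.Eventually.of_forall
        intro w
        have h1 := hpg _ ht1 x (w 0)
        have h3 := hpg _ ht3 (w (Fin.last k) + e (Fin.last k)) y
        have h2 : ∀ i : Fin k, p (τ i.succ - τ i.castSucc) (w i.castSucc + e i.castSucc) (w i.succ)
            ≤ C * gk C (τ i.succ - τ i.castSucc) (w i.succ - (w i.castSucc + e i.castSucc)) :=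
          fun i => hpg _ (ht2 i) _ _
        have hp10 := hp_nonneg _ ht1 x (w 0)
        have hp30 := hp_nonneg _ ht3 (w (Fin.last k) + e (Fin.last k)) y
        have hmid0 : 0 ≤ ∏ i : Fin k,
            p (τ i.succ - τ i.castSucc) (w i.castSucc + e i.castSucc) (w i.succ) :=
          Finset.prod_nonneg fun i _ => hp_nonneg _ (ht2 i) _ _
        have hCg10 : 0 ≤ C * gk C (τ 0) (w 0 - x) := mul_nonneg hC0.le gk_nonneg
        have hCgl0 : 0 ≤ C * gk C (h - τ (Fin.last k)) (y - (w (Fin.last k) + e (Fin.last k))) :=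
          mul_nonneg hC0.le gk_nonneg
        calc p (τ 0) x (w 0) * (∏ i, F (e i)) *
              (∏ i : Fin k,
                p (τ i.succ - τ i.castSucc) (w i.castSucc + e i.castSucc) (w i.succ)) *
              p (h - τ (Fin.last k)) (w (Fin.last k) + e (Fin.last k)) y
            ≤ (C * gk C (τ 0) (w 0 - x)) * (∏ i, F (e i)) *
              (∏ i : Fin k,
                (C * gk C (τ i.succ - τ i.castSucc) (w i.succ - (w i.castSucc + e i.castSucc)))) *
              (C * gk C (h - τ (Fin.last k)) (y - (w (Fin.last k) + e (Fin.last k)))) := by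
              have s1 : p (τ 0) x (w 0) * (∏ i, F (e i)) ≤ (C * gk C (τ 0) (w 0 - x)) * (∏ i, F (e i)) :=
                mul_le_mul_of_nonneg_right h1 hPF
              have s2 : (∏ i : Fin k,
                  p (τ i.succ - τ i.castSucc) (w i.castSucc + e i.castSucc) (w i.succ))
                  ≤ ∏ i : Fin k,
                    (C * gk C (τ i.succ - τ i.castSucc) (w i.succ - (w i.castSucc + e i.castSucc))) :=
                Finset.prod_le_prod (fun i _ => hp_nonneg _ (ht2 i) _ _) (fun i _ => h2 i)
              apply mul_le_mul
              · apply mul_le_mul s1 s2 hmid0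
                exact mul_nonneg hCg10 hPF
              · exact h3
              · exact hp30
              · apply mul_nonneg (mul_nonneg hCg10 hPF)
                exact Finset.prod_nonneg fun i _ => mul_nonneg hC0.le gk_nonneg
          _ = (C^(k+2) * ∏ i, F (e i)) *
              (gk C (τ 0) (w 0 - x) *
                (∏ i : Fin k,
                  gk C (τ i.succ - τ i.castSucc) (w i.succ - (w i.castSucc + e i.castSucc))) *
                gk C (h - τ (Fin.last k)) (y - (w (Fin.last k) + e (Fin.last k)))) := by
              rw [Finset.prod_mul_distrib, Finset.prod_const, Finset.card_univ, Fintype.card_fin]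
              ring
      · refine Measurable.aestronglyMeasurable ?_
        exact measurable_const.mul (chain_meas k (τ 0) (h - τ (Fin.last k))
          (fun i => τ i.succ - τ i.castSucc) (fun i => e i.castSucc) (e (Fin.last k)) x y)
      · apply Filter.Eventually.of_forall
        intro w
        refine mul_nonneg (mul_nonneg (by positivity) hPF) ?_
        exact mul_nonneg (mul_nonneg gk_nonneg (Finset.prod_nonneg fun i _ => gk_nonneg)) gk_nonneg
      · have hc0 : (0:ℝ) ≤ C^(k+2) * ∏ i, F (e i) := mul_nonneg (by positivity) hPF
        simp_rw [ENNReal.ofReal_mul hc0]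
        rw [lintegral_const_mul' _ _ ENNReal.ofReal_ne_top,
          chain_lintegral hC0 k (τ 0) (h - τ (Fin.last k)) (fun i => τ i.succ - τ i.castSucc)
            (fun i => e i.castSucc) (e (Fin.last k)) x y ht1.1 ht3.1 (fun i => (ht2 i).1)]
        have hT : τ 0 + (∑ i : Fin k, (τ i.succ - τ i.castSucc)) + (h - τ (Fin.last k)) = h := by
          rw [fin_telescope τ]; ring
        have hA : y - x - ((∑ i : Fin k, e i.castSucc) + e (Fin.last k)) = Y - ∑ i, e i := by
          rw [← Fin.sum_univ_castSucc (f := e), ← hY]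
        rw [hT, hA, ← hK, ← ENNReal.ofReal_mul hc0]
    -- the e-layer
    have hge_le : ∀ e : Fin (k+1) → ℝ,
        (C^(k+2) * ∏ i, F (e i)) * (K^(k+1) * gk C h (Y - ∑ i, e i))
          ≤ (C^(2*k+3) * K^(k+1) * K2 * Real.exp (-(u/2 * |Y|)))
              * ((∏ i, Real.exp (-(u/2 * |e i|))) * gk (2*C) h (Y - ∑ i, e i)) := by
      intro e
      have hPF : (0:ℝ) ≤ ∏ i, F (e i) := Finset.prod_nonneg fun i _ => hF_nonneg _
      have hPe : (0:ℝ) ≤ ∏ i, Real.exp (-(u * |e i|)) :=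
        Finset.prod_nonneg fun i _ => (Real.exp_pos _).le
      have hPe2 : (0:ℝ) ≤ ∏ i, Real.exp (-(u/2 * |e i|)) :=
        Finset.prod_nonneg fun i _ => (Real.exp_pos _).le
      have hFb : ∏ i, F (e i) ≤ C^(k+1) * ∏ i, Real.exp (-(u * |e i|)) := by
        calc ∏ i, F (e i) ≤ ∏ i, (C * Real.exp (-(u * |e i|))) :=
            Finset.prod_le_prod (fun i _ => hF_nonneg _) (fun i _ => hF_bound _)
          _ = C^(k+1) * ∏ i, Real.exp (-(u * |e i|)) := by
            rw [Finset.prod_mul_distrib, Finset.prod_const, Finset.card_univ, Fintype.card_fin]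
      have hsplit := gk_split hC hu hh0 hh1 (Y - ∑ i, e i)
      have htri := exp_triangle hu e Y
      calc (C^(k+2) * ∏ i, F (e i)) * (K^(k+1) * gk C h (Y - ∑ i, e i))
          ≤ (C^(k+2) * (C^(k+1) * ∏ i, Real.exp (-(u * |e i|)))) * (K^(k+1) * gk C h (Y - ∑ i, e i)) :=
            mul_le_mul_of_nonneg_right (mul_le_mul_of_nonneg_left hFb (by positivity))
              (mul_nonneg (by positivity) gk_nonneg)
        _ ≤ (C^(k+2) * (C^(k+1) * ∏ i, Real.exp (-(u * |e i|)))) *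
            (K^(k+1) * (K2 * Real.exp (-(u/2 * |Y - ∑ i, e i|)) * gk (2*C) h (Y - ∑ i, e i))) :=
            mul_le_mul_of_nonneg_left (mul_le_mul_of_nonneg_left hsplit (by positivity))
              (mul_nonneg (by positivity) (mul_nonneg (by positivity) hPe))
        _ = (C^(2*k+3) * K^(k+1) * K2) *
            ((Real.exp (-(u/2 * |Y - ∑ i, e i|)) * ∏ i, Real.exp (-(u * |e i|)))
              * gk (2*C) h (Y - ∑ i, e i)) := by ring
        _ ≤ (C^(2*k+3) * K^(k+1) * K2) *
            ((Real.exp (-(u/2 * |Y|)) * ∏ i, Real.exp (-(u/2 * |e i|)))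
              * gk (2*C) h (Y - ∑ i, e i)) :=
            mul_le_mul_of_nonneg_left (mul_le_mul_of_nonneg_right htri gk_nonneg) (by positivity)
        _ = (C^(2*k+3) * K^(k+1) * K2 * Real.exp (-(u/2 * |Y|)))
              * ((∏ i, Real.exp (-(u/2 * |e i|))) * gk (2*C) h (Y - ∑ i, e i)) := by ring
    apply integral_le_of_lintegral_le hVe0
    · apply Filter.Eventually.of_forall
      intro e
      apply integral_nonneg
      intro w
      have h1 := hp_nonneg _ ht1 x (w 0)
      have h3 := hp_nonneg _ ht3 (w (Fin.last k) + e (Fin.last k)) y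
      have hmid : 0 ≤ ∏ i : Fin k,
          p (τ i.succ - τ i.castSucc) (w i.castSucc + e i.castSucc) (w i.succ) :=
        Finset.prod_nonneg fun i _ => hp_nonneg _ (ht2 i) _ _
      have hPF : 0 ≤ ∏ i, F (e i) := Finset.prod_nonneg fun i _ => hF_nonneg _
      positivity
    · exact Filter.Eventually.of_forall wlayer
    · refine Measurable.aestronglyMeasurable ?_
      refine (measurable_const.mul (Finset.measurable_prod _ fun i _ =>
        hF_meas.comp (measurable_pi_apply i))).mul ?_
      exact (measurable_gk.comp (measurable_const.sub
        (Finset.measurable_sum _ fun i _ => measurable_pi_apply i))).const_mul _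
    · apply Filter.Eventually.of_forall
      intro e
      have hPF : (0:ℝ) ≤ ∏ i, F (e i) := Finset.prod_nonneg fun i _ => hF_nonneg _
      exact mul_nonneg (mul_nonneg (by positivity) hPF) (mul_nonneg (by positivity) gk_nonneg)
    · calc ∫⁻ e : Fin (k+1) → ℝ, ENNReal.ofReal
            ((C^(k+2) * ∏ i, F (e i)) * (K^(k+1) * gk C h (Y - ∑ i, e i)))
          ≤ ∫⁻ e : Fin (k+1) → ℝ, ENNReal.ofReal
            ((C^(2*k+3) * K^(k+1) * K2 * Real.exp (-(u/2 * |Y|)))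
              * ((∏ i, Real.exp (-(u/2 * |e i|))) * gk (2*C) h (Y - ∑ i, e i))) :=
            lintegral_mono fun e => ENNReal.ofReal_le_ofReal (hge_le e)
        _ = ENNReal.ofReal (C^(2*k+3) * K^(k+1) * K2 * Real.exp (-(u/2 * |Y|)))
            * ∫⁻ e : Fin (k+1) → ℝ, ENNReal.ofReal
              ((∏ i, Real.exp (-(u/2 * |e i|))) * gk (2*C) h (Y - ∑ i, e i)) := by
            simp_rw [ENNReal.ofReal_mul (show (0:ℝ) ≤ C^(2*k+3) * K^(k+1) * K2 * Real.exp (-(u/2 * |Y|)) from by positivity)]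
            rw [lintegral_const_mul' _ _ ENNReal.ofReal_ne_top]
        _ ≤ ENNReal.ofReal (C^(2*k+3) * K^(k+1) * K2 * Real.exp (-(u/2 * |Y|)))
            * (ENNReal.ofReal S2 * (ENNReal.ofReal Iu)^k) := by
            apply mul_le_mul_right
            have := elayer hC0 (show (0:ℝ) < u/2 from by positivity) hh0 k Y
            rw [hIuL] at this
            exact this
        _ = ENNReal.ofReal Ve := by
            rw [← ENNReal.ofReal_pow hIu0, ← ENNReal.ofReal_mul hS20,
              ← ENNReal.ofReal_mul (show (0:ℝ) ≤ C^(2*k+3) * K^(k+1) * K2 * Real.exp (-(u/2 * |Y|)) from by positivity)]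
            congr 1
            rw [hVe]
            ring
  -- outer layer
  unfold jumpDecompositionKernel
  calc (∫ τ in Sset, ∫ e : Fin (k+1) → ℝ, ∫ w : Fin (k+1) → ℝ,
        p (τ 0) x (w 0) * (∏ i, F (e i)) *
          (∏ i : Fin k,
            p (τ i.succ - τ i.castSucc) (w i.castSucc + e i.castSucc) (w i.succ)) *
          p (h - τ (Fin.last k)) (w (Fin.last k) + e (Fin.last k)) y)
      ≤ Ve * h^(k+1) := by
        apply integral_le_of_lintegral_le (by positivity)
        · rw [ae_restrict_iff' (measurable_simplex h)]
          apply Filter.Eventually.of_forall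
          intro τ hτ
          obtain ⟨ht1, ht2, ht3⟩ := htimes τ hτ
          apply integral_nonneg
          intro e
          apply integral_nonneg
          intro w
          have := hp_nonneg _ ht1 x (w 0)
          have := hp_nonneg _ ht3 (w (Fin.last k) + e (Fin.last k)) y
          have hmid : 0 ≤ ∏ i : Fin k,
              p (τ i.succ - τ i.castSucc) (w i.castSucc + e i.castSucc) (w i.succ) :=
            Finset.prod_nonneg fun i _ => hp_nonneg _ (ht2 i) _ _
          have hPF : 0 ≤ ∏ i, F (e i) := Finset.prod_nonneg fun i _ => hF_nonneg _
          positivity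
        · rw [ae_restrict_iff' (measurable_simplex h)]
          exact Filter.Eventually.of_forall (fun τ hτ => elayer_bound τ hτ)
        · exact aestronglyMeasurable_const
        · exact Filter.Eventually.of_forall fun _ => hVe0
        · rw [setLIntegral_const]
          calc ENNReal.ofReal Ve * volume Sset
              ≤ ENNReal.ofReal Ve * ENNReal.ofReal h ^ (k+1) := by
                exact mul_le_mul_right (simplex_vol hh0.le) _
            _ = ENNReal.ofReal (Ve * h^(k+1)) := by
                rw [ENNReal.ofReal_mul hVe0, ENNReal.ofReal_pow hh0.le]
    _ ≤ C^(2*k+3) * K ^ (k+1) * K2 * S2 * Iu^k * h^(k+1) * Real.exp (-(u/2 * |y - x|)) := by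
        rw [hVe, hY]
        ring_nf
        exact le_refl _

/-- First estimate of Corollary 2.2 (one-dimensional case): the tail
`q̄_h^{(2)}(x,y;λ) = e^{-λh} ∑_{k≥2} λ^k q_h^{(k)}(x,y)` of the jump-time expansion
is of order `h²` with exponential decay in `|y - x|`, uniformly in `λ ∈ (0,Λ]`.
Here `q_h^{(m+2)}` is `jumpDecompositionKernel p F h (m+1)`. -/
theorem jump_tail_series_bound (u C Λ : ℝ) (hu : 0 < u) (hC : 1 ≤ C) (hΛ : 0 < Λ)
    (p : ℝ → ℝ → ℝ → ℝ)
    (hp_meas : ∀ t ∈ Set.Ioc (0 : ℝ) 1, Measurable fun q : ℝ × ℝ => p t q.1 q.2)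
    (hp_nonneg : ∀ t ∈ Set.Ioc (0 : ℝ) 1, ∀ x y : ℝ, 0 ≤ p t x y)
    (hp_bound : ∀ t ∈ Set.Ioc (0 : ℝ) 1, ∀ x y : ℝ,
      p t x y ≤ C * (Real.sqrt t)⁻¹ * Real.exp (-(y - x) ^ 2 / (C * t)))
    (F : ℝ → ℝ) (hF_meas : Measurable F) (hF_nonneg : ∀ z, 0 ≤ F z)
    (hF_bound : ∀ z, F z ≤ C * Real.exp (-u * |z|)) :
    ∃ C' > (0 : ℝ), ∃ ζ ∈ Set.Ioo (0 : ℝ) 1, ∃ h0 ∈ Set.Ioc (0 : ℝ) 1,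
      ∀ h ∈ Set.Ioc (0 : ℝ) h0, ∀ x y : ℝ, ∀ lam ∈ Set.Ioc (0 : ℝ) Λ,
        Real.exp (-lam * h) *
            ∑' m : ℕ, lam ^ (m + 2) * jumpDecompositionKernel p F h (m + 1) x y
          ≤ C' * h ^ 2 * Real.exp (-u * ζ * |y - x|) := by
  have hC0 : (0:ℝ) < C := lt_of_lt_of_le one_pos hC
  set K : ℝ := Real.sqrt (π*C) with hK
  set K2 : ℝ := Real.exp (u^2*C/8) with hK2
  set S2 : ℝ := Real.sqrt (π*(2*C)) with hS2
  set Iu : ℝ := ∫ z : ℝ, Real.exp (-(u/2 * |z|)) with hIu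
  have hIu0 : 0 ≤ Iu := integral_nonneg fun z => (Real.exp_pos _).le
  have hKpos : 0 < K := Real.sqrt_pos.2 (by positivity)
  have hK20 : 0 < K2 := Real.exp_pos _
  have hS2pos : 0 < S2 := Real.sqrt_pos.2 (by positivity)
  set D0 : ℝ := C^5 * K^2 * K2 * S2 * (Iu+1) with hD0
  set B : ℝ := C^2 * K * (Iu+1) with hB
  have hD0pos : 0 < D0 := by positivity
  have hBpos : 0 < B := by positivity
  refine ⟨2*Λ^2*D0, by positivity, 1/2, ⟨by norm_num, by norm_num⟩,
    min 1 (1/(2*Λ*B)), ⟨lt_min one_pos (by positivity), min_le_left _ _⟩, ?_⟩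
  intro h hh x y lam hlam
  obtain ⟨hh0, hhle⟩ := hh
  have hh1 : h ≤ 1 := le_trans hhle (min_le_left _ _)
  have hhB : Λ * B * h ≤ 1/2 := by
    have h2 : h ≤ 1/(2*Λ*B) := le_trans hhle (min_le_right _ _)
    rw [le_div_iff₀ (by positivity)] at h2
    nlinarith
  set E : ℝ := Real.exp (-(u/2 * |y - x|)) with hE
  have hE0 : 0 < E := Real.exp_pos _
  have hFb' : ∀ z, F z ≤ C * Real.exp (-(u * |z|)) := by
    intro z; rw [← neg_mul]; exact hF_bound z
  have hq : ∀ m : ℕ, jumpDecompositionKernel p F h (m+1) x y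
      ≤ C^(2*(m+1)+3) * K^(m+2) * K2 * S2 * Iu^(m+1) * h^(m+2) * E := by
    intro m
    exact q_bound u C hu hC p hp_nonneg hp_bound F hF_meas hF_nonneg hFb' h hh0 hh1 (m+1) x y
  -- termwise bound by a geometric series
  have hterm : ∀ m : ℕ, lam^(m+2) * jumpDecompositionKernel p F h (m+1) x y
      ≤ (D0 * Λ^2 * h^2 * E) * (1/2)^m := by
    intro m
    have hl0 : (0:ℝ) < lam := hlam.1
    have hlΛ : lam ≤ Λ := hlam.2
    calc lam^(m+2) * jumpDecompositionKernel p F h (m+1) x y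
        ≤ lam^(m+2) * (C^(2*(m+1)+3) * K^(m+2) * K2 * S2 * Iu^(m+1) * h^(m+2) * E) :=
          mul_le_mul_of_nonneg_left (hq m) (by positivity)
      _ = (K2 * S2 * C^5 * K^2 * Iu) * (lam*h)^2 * ((C^2 * K * Iu) * (lam * h))^m * E := by
          ring
      _ ≤ (K2 * S2 * C^5 * K^2 * (Iu+1)) * (Λ*h)^2 * (B * (Λ * h))^m * E := by
          have hlh : lam * h ≤ Λ * h := mul_le_mul_of_nonneg_right hlΛ hh0.le
          have h1 : (lam*h)^2 ≤ (Λ*h)^2 := by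
            apply pow_le_pow_left₀ (by positivity) hlh
          have hCKB : C^2 * K * Iu ≤ B := by
            rw [hB]
            exact mul_le_mul_of_nonneg_left (by linarith) (by positivity)
          have h2 : ((C^2 * K * Iu) * (lam * h))^m ≤ (B * (Λ * h))^m := by
            apply pow_le_pow_left₀ (by positivity)
            exact mul_le_mul hCKB hlh (by positivity) hBpos.le
          have c1 : K2 * S2 * C^5 * K^2 * Iu ≤ K2 * S2 * C^5 * K^2 * (Iu+1) :=
            mul_le_mul_of_nonneg_left (by linarith) (by positivity)
          apply mul_le_mul_of_nonneg_right _ hE0.le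
          apply mul_le_mul _ h2 (pow_nonneg (by positivity) m) (by positivity)
          exact mul_le_mul c1 h1 (sq_nonneg _) (by positivity)
      _ ≤ (D0 * Λ^2 * h^2 * E) * (1/2)^m := by
          rw [hD0]
          have h4 : (B * (Λ * h))^m ≤ (1/2)^m := by
            apply pow_le_pow_left₀ (by positivity)
            calc B * (Λ * h) = Λ * B * h := by ring
              _ ≤ 1/2 := hhB
          calc K2 * S2 * C^5 * K^2 * (Iu+1) * (Λ*h)^2 * (B * (Λ * h))^m * E
              ≤ K2 * S2 * C^5 * K^2 * (Iu+1) * (Λ*h)^2 * (1/2)^m * E := by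
                apply mul_le_mul_of_nonneg_right _ hE0.le
                exact mul_le_mul_of_nonneg_left h4 (by positivity)
            _ = (C^5 * K^2 * K2 * S2 * (Iu+1) * Λ^2 * h^2 * E) * (1/2)^m := by ring
  have hsum_b : Summable (fun m : ℕ => (D0 * Λ^2 * h^2 * E) * (1/2)^m) :=
    (summable_geometric_of_lt_one (by norm_num) (by norm_num)).mul_left _
  have htsum_b : ∑' m : ℕ, (D0 * Λ^2 * h^2 * E) * (1/2)^m = (D0 * Λ^2 * h^2 * E) * 2 := by
    rw [tsum_mul_left, tsum_geometric_of_lt_one (by norm_num) (by norm_num)]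
    norm_num
  have hRHS0 : 0 ≤ 2*Λ^2*D0 * h ^ 2 * Real.exp (-u * (1/2) * |y - x|) := by positivity
  have hEeq : Real.exp (-u * (1/2) * |y - x|) = E := by
    rw [hE]; congr 1; ring
  have htail : (∑' m : ℕ, lam ^ (m + 2) * jumpDecompositionKernel p F h (m + 1) x y)
      ≤ 2*Λ^2*D0 * h ^ 2 * Real.exp (-u * (1/2) * |y - x|) := by
    by_cases hs : Summable (fun m : ℕ => lam ^ (m + 2) * jumpDecompositionKernel p F h (m + 1) x y)
    · calc (∑' m : ℕ, lam ^ (m + 2) * jumpDecompositionKernel p F h (m + 1) x y)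
          ≤ ∑' m : ℕ, (D0 * Λ^2 * h^2 * E) * (1/2)^m := Summable.tsum_le_tsum hterm hs hsum_b
        _ = (D0 * Λ^2 * h^2 * E) * 2 := htsum_b
        _ = 2*Λ^2*D0 * h ^ 2 * Real.exp (-u * (1/2) * |y - x|) := by rw [hEeq]; ring
    · rw [tsum_eq_zero_of_not_summable hs]
      exact hRHS0
  have hexp1 : Real.exp (-lam * h) ≤ 1 :=
    Real.exp_le_one_iff.2 (by nlinarith [hlam.1.le, hh0.le, mul_nonneg hlam.1.le hh0.le])
  rcases le_or_gt 0 (∑' m : ℕ, lam ^ (m + 2) * jumpDecompositionKernel p F h (m + 1) x y) with hT | hT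
  · calc Real.exp (-lam * h) *
        ∑' m : ℕ, lam ^ (m + 2) * jumpDecompositionKernel p F h (m + 1) x y
        ≤ 1 * ∑' m : ℕ, lam ^ (m + 2) * jumpDecompositionKernel p F h (m + 1) x y :=
          mul_le_mul_of_nonneg_right hexp1 hT
      _ = ∑' m : ℕ, lam ^ (m + 2) * jumpDecompositionKernel p F h (m + 1) x y := one_mul _
      _ ≤ 2*Λ^2*D0 * h ^ 2 * Real.exp (-u * (1/2) * |y - x|) := htail
  · calc Real.exp (-lam * h) *
        ∑' m : ℕ, lam ^ (m + 2) * jumpDecompositionKernel p F h (m + 1) x y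
        ≤ 0 := mul_nonpos_of_nonneg_of_nonpos (Real.exp_pos _).le hT.le
      _ ≤ 2*Λ^2*D0 * h ^ 2 * Real.exp (-u * (1/2) * |y - x|) := hRHS0
end
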